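/- arXiv:2510.21126 — 3 statements merged into one kernel-verified Lean document; each statement's English description precedes it below -/
import Mathlib

section
/- Let (P) be a bilevel LP as in the context. Then F(P) = ⋃_{ω ∈ Ω} U_ω, where Ω = {ω ∈ {0,1}^{m1} : there exists λ ∈ ℝ^{m1} with λ ≥ 0, λ_j = 0 for every j with ω_j = 0, and A11ᵀλ = c11}, and for each ω ∈ Ω, U_ω = {(x1, x2) : A21 x1 + A22 x2 ≥ b2, A11 x1 + A12 x2 ≥ b1, and (A11 x1 + A12 x2 − b1)_j = 0 for every j with ω_j = 1}. In particular, F(P) is the union of at most 2^{m1} polyhedra. -/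
noncomputable section

/-- A polyhedron: a finite intersection of closed half-spaces. -/
def IsPolyhedron {E : Type} [AddCommGroup E] [Module ℝ E] (Q : Set E) : Prop :=
  ∃ (k : ℕ) (φ : Fin k → E →ₗ[ℝ] ℝ) (c : Fin k → ℝ), Q = {x | ∀ i, φ i x ≤ c i}

/-- The (bilevel) feasible set `F(P)` of the bilevel LP `(P)`. -/
def BFeas (m1 m2 n1 n2 : ℕ)
    (A11 : Matrix (Fin m1) (Fin n1) ℚ) (A12 : Matrix (Fin m1) (Fin n2) ℚ)
    (A21 : Matrix (Fin m2) (Fin n1) ℚ) (A22 : Matrix (Fin m2) (Fin n2) ℚ)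
    (b1 : Fin m1 → ℚ) (b2 : Fin m2 → ℚ) (c11 : Fin n1 → ℚ) :
    Set ((Fin n1 → ℝ) × (Fin n2 → ℝ)) :=
  {x | (∀ j, (b2 j : ℝ) ≤ ∑ k, (A21 j k : ℝ) * x.1 k + ∑ k, (A22 j k : ℝ) * x.2 k) ∧
       (∀ j, (b1 j : ℝ) ≤ ∑ k, (A11 j k : ℝ) * x.1 k + ∑ k, (A12 j k : ℝ) * x.2 k) ∧
       ∀ y : Fin n1 → ℝ,
         (∀ j, (b1 j : ℝ) ≤ ∑ k, (A11 j k : ℝ) * y k + ∑ k, (A12 j k : ℝ) * x.2 k) →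
         ∑ k, (c11 k : ℝ) * x.1 k ≤ ∑ k, (c11 k : ℝ) * y k}

/-- The index set `Ω` of dual sign patterns. -/
def Omega (m1 n1 : ℕ) (A11 : Matrix (Fin m1) (Fin n1) ℚ) (c11 : Fin n1 → ℚ) :
    Set (Fin m1 → Bool) :=
  {ω | ∃ lam : Fin m1 → ℝ, (∀ j, 0 ≤ lam j) ∧ (∀ j, ω j = false → lam j = 0) ∧
    ∀ k, ∑ j, (A11 j k : ℝ) * lam j = (c11 k : ℝ)}

/-- The polyhedron `U_ω`. -/
def Upoly (m1 m2 n1 n2 : ℕ)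
    (A11 : Matrix (Fin m1) (Fin n1) ℚ) (A12 : Matrix (Fin m1) (Fin n2) ℚ)
    (A21 : Matrix (Fin m2) (Fin n1) ℚ) (A22 : Matrix (Fin m2) (Fin n2) ℚ)
    (b1 : Fin m1 → ℚ) (b2 : Fin m2 → ℚ) (ω : Fin m1 → Bool) :
    Set ((Fin n1 → ℝ) × (Fin n2 → ℝ)) :=
  {x | (∀ j, (b2 j : ℝ) ≤ ∑ k, (A21 j k : ℝ) * x.1 k + ∑ k, (A22 j k : ℝ) * x.2 k) ∧
       (∀ j, (b1 j : ℝ) ≤ ∑ k, (A11 j k : ℝ) * x.1 k + ∑ k, (A12 j k : ℝ) * x.2 k) ∧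
       ∀ j, ω j = true →
         ∑ k, (A11 j k : ℝ) * x.1 k + ∑ k, (A12 j k : ℝ) * x.2 k = (b1 j : ℝ)}


section FarkasInfra

open scoped InnerProductSpace

variable {H : Type} [NormedAddCommGroup H] [InnerProductSpace ℝ H] [FiniteDimensional ℝ H]
variable {ι : Type} [Fintype ι] [DecidableEq ι]

open Finset

variable {H : Type} [NormedAddCommGroup H] [InnerProductSpace ℝ H] [FiniteDimensional ℝ H]
variable {ι : Type} [Fintype ι] [DecidableEq ι]

/-- Conic Carathéodory: any nonnegative combination equals one supported on a
linearly independent subfamily. -/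
lemma conic_carath (a : ι → H) :
    ∀ (n : ℕ) (lam : ι → ℝ), (univ.filter fun j => lam j ≠ 0).card = n →
      (∀ j, 0 ≤ lam j) →
      ∃ (S : Finset ι) (mu : ι → ℝ), (∀ j, 0 ≤ mu j) ∧ (∀ j, j ∉ S → mu j = 0) ∧
        LinearIndependent ℝ (fun j : S => a j) ∧ ∑ j, mu j • a j = ∑ j, lam j • a j := by
  intro n
  induction n using Nat.strong_induction_on with
  | _ n IH =>
    intro lam hcard hlam
    set S₀ : Finset ι := univ.filter fun j => lam j ≠ 0 with hS₀
    by_cases hind : LinearIndependent ℝ (fun j : S₀ => a j)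
    · exact ⟨S₀, lam, hlam, fun j hj => by simpa [hS₀] using hj, hind, rfl⟩
    · obtain ⟨g, hg0, i, hgi⟩ := Fintype.not_linearIndependent_iff.1 hind
      set nu0 : ι → ℝ := fun j => if h : j ∈ S₀ then g ⟨j, h⟩ else 0 with hnu0
      have hnusum : ∑ j, nu0 j • a j = 0 := by
        rw [← Finset.sum_filter_of_ne (p := fun j => j ∈ S₀)
          (f := fun j => nu0 j • a j) (by intro j _ hj; by_contra h
                                          simp [hnu0, h] at hj)]
        rw [show (univ.filter fun j => j ∈ S₀) = S₀ by simp]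
        rw [← Finset.sum_attach S₀ (fun j => nu0 j • a j)]
        simpa [hnu0] using hg0
      have hnu0supp : ∀ j, j ∉ S₀ → nu0 j = 0 := fun j hj => by simp [hnu0, hj]
      have hnune : ∃ j, nu0 j ≠ 0 := ⟨i, by simpa [hnu0, i.2] using hgi⟩
      obtain ⟨nu, hnusum, hnupos, hnusupp⟩ :
          ∃ nu : ι → ℝ, ∑ j, nu j • a j = 0 ∧ (∃ j, 0 < nu j) ∧ ∀ j, j ∉ S₀ → nu j = 0 := by
        obtain ⟨i0, hi0⟩ := hnune
        rcases lt_or_gt_of_ne hi0 with h | h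
        · exact ⟨-nu0, by simpa using hnusum, ⟨i0, by simpa using h⟩,
            fun j hj => by simp [hnu0supp j hj]⟩
        · exact ⟨nu0, hnusum, ⟨i0, h⟩, hnu0supp⟩
      set T : Finset ι := univ.filter fun j => 0 < nu j with hT
      have hTne : T.Nonempty := by obtain ⟨j, hj⟩ := hnupos; exact ⟨j, by simp [hT, hj]⟩
      obtain ⟨j0, hj0T, hj0min⟩ := T.exists_min_image (fun j => lam j / nu j) hTne
      have hnuj0 : 0 < nu j0 := by simpa [hT] using hj0T
      set t : ℝ := lam j0 / nu j0 with ht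
      have ht0 : 0 ≤ t := div_nonneg (hlam j0) hnuj0.le
      set mu : ι → ℝ := fun j => lam j - t * nu j with hmu
      have hmu0 : ∀ j, 0 ≤ mu j := by
        intro j
        rcases le_or_gt (nu j) 0 with h | h
        · have : t * nu j ≤ 0 := mul_nonpos_of_nonneg_of_nonpos ht0 h
          simp only [hmu]; linarith [hlam j]
        · have h1 : t ≤ lam j / nu j := hj0min j (by simp [hT, h])
          have h2 : t * nu j ≤ lam j := (le_div_iff₀ h).1 h1
          simp only [hmu]; linarith
      have hmusupp : ∀ j, j ∉ S₀ → mu j = 0 := by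
        intro j hj
        have h1 : lam j = 0 := by by_contra h; exact hj (by simp [hS₀, h])
        simp [hmu, h1, hnusupp j hj]
      have hmuj0 : mu j0 = 0 := by
        simp [hmu, ht, div_mul_cancel₀ _ hnuj0.ne']
      have hj0S₀ : j0 ∈ S₀ := by
        by_contra h; exact absurd (hnusupp j0 h) hnuj0.ne'
      have hsublt : (univ.filter fun j => mu j ≠ 0) ⊂ S₀ := by
        constructor
        · intro j hj
          simp only [mem_filter, mem_univ, true_and] at hj
          by_contra h; exact hj (hmusupp j h)
        · intro hsub
          have := hsub hj0S₀
          simp only [mem_filter, mem_univ, true_and] at this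
          exact this hmuj0
      have hcard' : (univ.filter fun j => mu j ≠ 0).card < n := by
        rw [← hcard]; exact Finset.card_lt_card hsublt
      obtain ⟨S, mu', h1, h2, h3, h4⟩ := IH _ hcard' mu rfl hmu0
      refine ⟨S, mu', h1, h2, h3, ?_⟩
      rw [h4]
      have : ∑ j, mu j • a j = ∑ j, lam j • a j - t • ∑ j, nu j • a j := by
        simp [hmu, sub_smul, Finset.sum_sub_distrib, mul_smul, Finset.smul_sum]
      rw [this, hnusum, smul_zero, sub_zero]

lemma conic_carath' (a : ι → H) (lam : ι → ℝ) (hlam : ∀ j, 0 ≤ lam j) :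
      ∃ (S : Finset ι) (mu : ι → ℝ), (∀ j, 0 ≤ mu j) ∧ (∀ j, j ∉ S → mu j = 0) ∧
        LinearIndependent ℝ (fun j : S => a j) ∧ ∑ j, mu j • a j = ∑ j, lam j • a j :=
  conic_carath a _ lam rfl hlam

/-- The finitely generated cone is closed. -/

lemma isClosed_fin_cone (a : ι → H) :
    IsClosed {x : H | ∃ lam : ι → ℝ, (∀ j, 0 ≤ lam j) ∧ x = ∑ j, lam j • a j} := by
  have key : {x : H | ∃ lam : ι → ℝ, (∀ j, 0 ≤ lam j) ∧ x = ∑ j, lam j • a j} =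
      ⋃ (S : Finset ι), ⋃ (_ : LinearIndependent ℝ (fun j : S => a j)),
        (Fintype.linearCombination ℝ (fun j : S => a j)) ''
          {lam : S → ℝ | ∀ j, 0 ≤ lam j} := by
    ext x
    simp only [Set.mem_setOf_eq, Set.mem_iUnion, Set.mem_image]
    constructor
    · rintro ⟨lam, hlam, rfl⟩
      obtain ⟨S, mu, h1, h2, h3, h4⟩ := conic_carath' a lam hlam
      refine ⟨S, h3, fun j => mu j, fun j => h1 j, ?_⟩
      rw [Fintype.linearCombination_apply, ← h4]
      rw [← Finset.sum_filter_of_ne (p := fun j => j ∈ S)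
        (f := fun j => mu j • a j) (by intro j _ hj; by_contra h; exact hj (by simp [h2 j h]))]
      rw [show (univ.filter fun j => j ∈ S) = S by simp]
      rw [← Finset.sum_attach S (fun j => mu j • a j)]
      rw [Finset.univ_eq_attach]
    · rintro ⟨S, _, lam, hlam, rfl⟩
      classical
      refine ⟨fun j => if h : j ∈ S then lam ⟨j, h⟩ else 0, ?_, ?_⟩
      · intro j; by_cases h : j ∈ S <;> simp [h, hlam]
      · rw [Fintype.linearCombination_apply]
        rw [show (∑ j : ι, (fun j => if h : j ∈ S then lam ⟨j, h⟩ else 0) j • a j)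
            = ∑ j ∈ S, (fun j => if h : j ∈ S then lam ⟨j, h⟩ else 0) j • a j from
          (Finset.sum_subset (Finset.subset_univ S) (fun j _ hj => by simp [hj])).symm]
        rw [← Finset.sum_attach S fun j => (if h : j ∈ S then lam ⟨j, h⟩ else 0) • a j]
        rw [Finset.univ_eq_attach]
        exact Finset.sum_congr rfl fun j _ => by simp [j.2]
  rw [key]
  refine isClosed_iUnion_of_finite fun S => ?_
  refine isClosed_iUnion_of_finite fun hS => ?_
  have hinj : Function.Injective (Fintype.linearCombination ℝ (fun j : S => a j)) := by
    intro f g hfg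
    have h0 : Fintype.linearCombination ℝ (fun j : S => a j) (f - g) = 0 := by
      rw [map_sub, hfg, sub_self]
    rw [Fintype.linearCombination_apply] at h0
    have := Fintype.linearIndependent_iff.1 hS (f - g) (by simpa using h0)
    funext j; have := this j; simp [sub_eq_zero] at this; exact this
  have hce := (Fintype.linearCombination ℝ (fun j : S => a j)).isClosedEmbedding_of_injective
    (LinearMap.ker_eq_bot.2 hinj)
  refine hce.isClosedMap _ ?_
  have : {lam : S → ℝ | ∀ j, 0 ≤ lam j} = ⋂ j, {lam : S → ℝ | 0 ≤ lam j} := by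
    ext; simp [Set.mem_iInter]
  rw [this]
  exact isClosed_iInter fun j => isClosed_le continuous_const (continuous_apply j)

open scoped InnerProductSpace in
/-- Farkas lemma. -/
lemma farkas [CompleteSpace H] (a : ι → H) (c : H)
    (h : ∀ d : H, (∀ j, 0 ≤ ⟪a j, d⟫_ℝ) → 0 ≤ ⟪c, d⟫_ℝ) :
    ∃ lam : ι → ℝ, (∀ j, 0 ≤ lam j) ∧ c = ∑ j, lam j • a j := by
  classical
  set Cs : Set H := {x : H | ∃ lam : ι → ℝ, (∀ j, 0 ≤ lam j) ∧ x = ∑ j, lam j • a j} with hCs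
  by_contra hc
  have hcC : c ∉ Cs := hc
  set K : ProperCone ℝ H :=
    { carrier := Cs
      zero_mem' := ⟨fun _ => 0, fun _ => le_refl 0, by simp⟩
      isClosed' := isClosed_fin_cone a
      smul_mem' := by
        rintro r x ⟨lam, hlam, rfl⟩
        exact ⟨fun j => (r : ℝ) * lam j, fun j => mul_nonneg r.2 (hlam j),
          by rw [← Nonneg.coe_smul]; simp [Finset.smul_sum, mul_smul]⟩
      add_mem' := by
        rintro x y ⟨lam, hlam, rfl⟩ ⟨mu, hmu, rfl⟩
        exact ⟨fun j => lam j + mu j, fun j => add_nonneg (hlam j) (hmu j),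
          by simp [add_smul, Finset.sum_add_distrib]⟩ } with hK
  have hne : (K : Set H).Nonempty := ⟨0, ⟨fun _ => 0, fun _ => le_refl 0, by simp⟩⟩
  have hcl : IsClosed (K : Set H) := isClosed_fin_cone a
  obtain ⟨y, hy1, hy2⟩ :=
    K.hyperplane_separation' (x₀ := c) hcC
  have hay : ∀ j, 0 ≤ ⟪a j, y⟫_ℝ := by
    intro j
    refine hy1 (a j) ⟨fun i => if i = j then 1 else 0, fun i => by positivity, ?_⟩
    simp [ite_smul]
  have := h y hay
  linarith

lemma farkas_rows {n : ℕ} {ι : Type} [Fintype ι] [DecidableEq ι]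
    (A : ι → Fin n → ℝ) (c : Fin n → ℝ)
    (h : ∀ d : Fin n → ℝ, (∀ j, 0 ≤ ∑ k, A j k * d k) → 0 ≤ ∑ k, c k * d k) :
    ∃ lam : ι → ℝ, (∀ j, 0 ≤ lam j) ∧ ∀ k, ∑ j, A j k * lam j = c k := by
  have inner_eq : ∀ u v : EuclideanSpace ℝ (Fin n), ⟪u, v⟫_ℝ = ∑ k, u k * v k := by
    intro u v
    simp [PiLp.inner_apply, RCLike.inner_apply]
    exact Finset.sum_congr rfl fun _ _ => mul_comm _ _
  obtain ⟨lam, hlam, hsum⟩ := farkas (H := EuclideanSpace ℝ (Fin n))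
    (a := fun j => WithLp.toLp 2 (A j)) (c := WithLp.toLp 2 c) (by
      intro d hd
      rw [inner_eq]
      exact h d.ofLp (fun j => by have := hd j; rwa [inner_eq] at this))
  refine ⟨lam, hlam, fun k => ?_⟩
  have hk : c k = (∑ j, lam j • (fun (j' : ι) => WithLp.toLp 2 (A j') :
      ι → EuclideanSpace ℝ (Fin n)) j) k := by
    rw [← hsum]
  simp only [WithLp.ofLp_sum, WithLp.ofLp_smul, Finset.sum_apply, Pi.smul_apply, smul_eq_mul] at hk
  rw [hk]
  exact Finset.sum_congr rfl fun j _ => mul_comm _ _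

end FarkasInfra

open Finset

lemma isPolyhedron_of_fintype {E : Type} [AddCommGroup E] [Module ℝ E]
    {ι : Type} [Fintype ι] (φ : ι → E →ₗ[ℝ] ℝ) (c : ι → ℝ) :
    IsPolyhedron {x | ∀ i, φ i x ≤ c i} := by
  refine ⟨Fintype.card ι, fun i => φ ((Fintype.equivFin ι).symm i),
    fun i => c ((Fintype.equivFin ι).symm i), ?_⟩
  ext x
  simp only [Set.mem_setOf_eq]
  constructor
  · exact fun h i => h _
  · intro h i
    have := h (Fintype.equivFin ι i)
    simpa using this

lemma isPolyhedron_empty {E : Type} [AddCommGroup E] [Module ℝ E] :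
    IsPolyhedron (∅ : Set E) := by
  refine ⟨1, fun _ => 0, fun _ => -1, ?_⟩
  ext x
  simp only [Set.mem_empty_iff_false, Set.mem_setOf_eq, LinearMap.zero_apply, false_iff, not_forall]
  exact ⟨0, by norm_num⟩

/-- The linear functional `x ↦ ∑ u k * x.1 k + ∑ v k * x.2 k`. -/
def rowL {n1 n2 : ℕ} (u : Fin n1 → ℝ) (v : Fin n2 → ℝ) :
    ((Fin n1 → ℝ) × (Fin n2 → ℝ)) →ₗ[ℝ] ℝ where
  toFun := fun x => ∑ k, u k * x.1 k + ∑ k, v k * x.2 k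
  map_add' := by
    intro a b
    simp only [Prod.fst_add, Prod.snd_add, Pi.add_apply, mul_add, Finset.sum_add_distrib]
    ring
  map_smul' := by
    intro r a
    simp only [Prod.smul_fst, Prod.smul_snd, Pi.smul_apply, smul_eq_mul, RingHom.id_apply,
      Finset.mul_sum, mul_add]
    congr 1 <;> exact Finset.sum_congr rfl fun k _ => by ring

lemma rowL_apply {n1 n2 : ℕ} (u : Fin n1 → ℝ) (v : Fin n2 → ℝ) (x) :
    rowL u v x = ∑ k, u k * x.1 k + ∑ k, v k * x.2 k := rfl

lemma isPolyhedron_Upoly (m1 m2 n1 n2 : ℕ)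
    (A11 : Matrix (Fin m1) (Fin n1) ℚ) (A12 : Matrix (Fin m1) (Fin n2) ℚ)
    (A21 : Matrix (Fin m2) (Fin n1) ℚ) (A22 : Matrix (Fin m2) (Fin n2) ℚ)
    (b1 : Fin m1 → ℚ) (b2 : Fin m2 → ℚ) (ω : Fin m1 → Bool) :
    IsPolyhedron (Upoly m1 m2 n1 n2 A11 A12 A21 A22 b1 b2 ω) := by
  classical
  set φ : (Fin m2 ⊕ Fin m1 ⊕ Fin m1) → ((Fin n1 → ℝ) × (Fin n2 → ℝ)) →ₗ[ℝ] ℝ :=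
    Sum.elim (fun j => - rowL (fun k => (A21 j k : ℝ)) (fun k => (A22 j k : ℝ)))
      (Sum.elim (fun j => - rowL (fun k => (A11 j k : ℝ)) (fun k => (A12 j k : ℝ)))
        (fun j => if ω j = true then
            rowL (fun k => (A11 j k : ℝ)) (fun k => (A12 j k : ℝ)) else 0)) with hφ
  set c : (Fin m2 ⊕ Fin m1 ⊕ Fin m1) → ℝ :=
    Sum.elim (fun j => -(b2 j : ℝ))
      (Sum.elim (fun j => -(b1 j : ℝ))
        (fun j => if ω j = true then (b1 j : ℝ) else 0)) with hc
  have heq : Upoly m1 m2 n1 n2 A11 A12 A21 A22 b1 b2 ω = {x | ∀ i, φ i x ≤ c i} := by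
    ext x
    simp only [Upoly, Set.mem_setOf_eq, hφ, hc, Sum.forall, Sum.elim_inl, Sum.elim_inr,
      LinearMap.neg_apply, rowL_apply, neg_le_neg_iff]
    constructor
    · rintro ⟨h2, h1, he⟩
      refine ⟨fun j => h2 j, fun j => h1 j, fun j => ?_⟩
      by_cases hb : ω j = true
      · rw [if_pos hb, if_pos hb, rowL_apply]
        exact le_of_eq (he j hb)
      · rw [if_neg hb, if_neg hb]
        simp
    · rintro ⟨h2, h1, he⟩
      refine ⟨fun j => h2 j, fun j => h1 j, fun j hj => ?_⟩
      have := he j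
      rw [if_pos hj, if_pos hj, rowL_apply] at this
      exact le_antisymm this (h1 j)
  rw [heq]
  exact isPolyhedron_of_fintype φ c


theorem BFeas_eq_iUnion (m1 m2 n1 n2 : ℕ)
    (A11 : Matrix (Fin m1) (Fin n1) ℚ) (A12 : Matrix (Fin m1) (Fin n2) ℚ)
    (A21 : Matrix (Fin m2) (Fin n1) ℚ) (A22 : Matrix (Fin m2) (Fin n2) ℚ)
    (b1 : Fin m1 → ℚ) (b2 : Fin m2 → ℚ) (c11 : Fin n1 → ℚ) :
    BFeas m1 m2 n1 n2 A11 A12 A21 A22 b1 b2 c11 =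
      ⋃ ω ∈ Omega m1 n1 A11 c11, Upoly m1 m2 n1 n2 A11 A12 A21 A22 b1 b2 ω := by
  classical
  ext x
  simp only [Set.mem_iUnion, exists_prop]
  constructor
  · rintro ⟨hx2, hx1, hopt⟩
    -- active set
    set act : Fin m1 → Prop :=
      fun j => ∑ k, (A11 j k : ℝ) * x.1 k + ∑ k, (A12 j k : ℝ) * x.2 k = (b1 j : ℝ) with hact
    set ω : Fin m1 → Bool := fun j => if act j then true else false with hω
    have hωt : ∀ j, ω j = true ↔ act j := by
      intro j; simp only [hω]; split
      · rename_i h; exact iff_of_true rfl h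
      · rename_i h; exact iff_of_false (by simp) h
    have hωf : ∀ j, ω j = false ↔ ¬ act j := by
      intro j; simp only [hω]; split
      · rename_i h; exact iff_of_false (by simp) (not_not_intro h)
      · rename_i h; exact iff_of_true rfl h
    -- the Farkas hypothesis
    have hfar : ∀ d : Fin n1 → ℝ,
        (∀ j : {j : Fin m1 // ω j = true}, 0 ≤ ∑ k, (A11 j.1 k : ℝ) * d k) →
        0 ≤ ∑ k, (c11 k : ℝ) * d k := by
      intro d hd
      -- slack
      set p : Fin m1 → ℝ := fun j => ∑ k, (A11 j k : ℝ) * d k with hp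
      set slack : Fin m1 → ℝ :=
        fun j => (∑ k, (A11 j k : ℝ) * x.1 k + ∑ k, (A12 j k : ℝ) * x.2 k) - (b1 j : ℝ)
        with hslack
      have hslack0 : ∀ j, 0 ≤ slack j := fun j => by
        simp only [hslack]; linarith [hx1 j]
      have hslackpos : ∀ j, ω j = false → 0 < slack j := by
        intro j hj
        rcases lt_or_eq_of_le (hslack0 j) with h | h
        · exact h
        · have hactj : act j := by
            simp only [hslack] at h
            simp only [hact]
            linarith
          exact absurd hactj ((hωf j).1 hj)
      set δ : Fin m1 → ℝ :=
        fun j => if p j < 0 ∧ ω j = false then slack j / (-(p j)) else 1 with hδ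
      have hδpos : ∀ j, 0 < δ j := by
        intro j
        simp only [hδ]
        split
        · rename_i hcond
          exact div_pos (hslackpos j hcond.2) (by linarith [hcond.1])
        · norm_num
      set εF : Finset ℝ := insert 1 (univ.image δ) with hεF
      have hεFne : εF.Nonempty := ⟨1, by simp [hεF]⟩
      set ε : ℝ := εF.min' hεFne with hε
      have hεpos : 0 < ε := by
        rw [hε, Finset.lt_min'_iff]
        intro b hb
        simp only [hεF, Finset.mem_insert, Finset.mem_image] at hb
        rcases hb with rfl | ⟨j, _, rfl⟩
        · norm_num
        · exact hδpos j
      have hεδ : ∀ j, ε ≤ δ j := fun j =>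
        Finset.min'_le _ _ (Finset.mem_insert_of_mem (Finset.mem_image_of_mem δ (Finset.mem_univ j)))
      -- the perturbed point is feasible
      have hyfeas : ∀ j, (b1 j : ℝ) ≤
          ∑ k, (A11 j k : ℝ) * (x.1 k + ε * d k) + ∑ k, (A12 j k : ℝ) * x.2 k := by
        intro j
        have hexp : ∑ k, (A11 j k : ℝ) * (x.1 k + ε * d k)
            = ∑ k, (A11 j k : ℝ) * x.1 k + ε * p j := by
          simp only [hp]
          rw [Finset.mul_sum, ← Finset.sum_add_distrib]
          exact Finset.sum_congr rfl fun k _ => by ring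
        rw [hexp]
        rcases le_or_gt 0 (p j) with hpj | hpj
        · nlinarith [hx1 j, hεpos]
        · rcases Bool.eq_false_or_eq_true (ω j) with hωj | hωj
          · exfalso; exact absurd (hd ⟨j, hωj⟩) (by simp only [hp] at hpj; linarith)
          · have h1 : ε ≤ slack j / (-(p j)) := by
              have h := hεδ j
              simp only [hδ] at h
              rwa [if_pos ⟨hpj, hωj⟩] at h
            have h2 : ε * (-(p j)) ≤ slack j := by
              rw [← le_div_iff₀ (by linarith)]
              exact h1
            simp only [hslack] at h2
            linarith
      have := hopt (fun k => x.1 k + ε * d k) hyfeas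
      have hexp : ∑ k, (c11 k : ℝ) * (x.1 k + ε * d k)
          = ∑ k, (c11 k : ℝ) * x.1 k + ε * ∑ k, (c11 k : ℝ) * d k := by
        rw [Finset.mul_sum, ← Finset.sum_add_distrib]
        exact Finset.sum_congr rfl fun k _ => by ring
      rw [hexp] at this
      nlinarith [hεpos]
    obtain ⟨lam', hlam'0, hlam'⟩ := farkas_rows
      (ι := {j : Fin m1 // ω j = true})
      (fun j k => (A11 j.1 k : ℝ)) (fun k => (c11 k : ℝ)) hfar
    set lam : Fin m1 → ℝ := fun j => if h : ω j = true then lam' ⟨j, h⟩ else 0 with hlam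
    refine ⟨ω, ⟨lam, ?_, ?_, ?_⟩, ?_, ?_, ?_⟩
    · intro j; simp only [hlam]; split
      · exact hlam'0 _
      · exact le_rfl
    · intro j hj; simp only [hlam]
      rw [dif_neg (by simp [hj])]
    · intro k
      rw [← hlam' k]
      rw [show (∑ j, (A11 j k : ℝ) * lam j)
          = ∑ j ∈ univ.filter (fun j => ω j = true), (A11 j k : ℝ) * lam j from
        (Finset.sum_filter_of_ne (fun j _ hj => by
          by_contra h
          have hz : lam j = 0 := by
            simp only [hlam]
            exact dif_neg h
          exact hj (by rw [hz, mul_zero]))).symm]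
      rw [Finset.sum_subtype (p := fun j => ω j = true)
        (univ.filter fun j => ω j = true)
        (by intro j; simp) (fun j => (A11 j k : ℝ) * lam j)]
      exact Finset.sum_congr rfl fun j _ => by simp [hlam, j.2]
    · exact hx2
    · exact hx1
    · intro j hj
      exact (hωt j).1 hj
  · rintro ⟨ω, ⟨lam, hlam0, hlamsupp, hlamsum⟩, hx2, hx1, hxeq⟩
    refine ⟨hx2, hx1, ?_⟩
    intro y hy
    have e1 : ∀ z : Fin n1 → ℝ,
        ∑ k, (c11 k : ℝ) * z k = ∑ j, lam j * ∑ k, (A11 j k : ℝ) * z k := by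
      intro z
      calc ∑ k, (c11 k : ℝ) * z k
          = ∑ k, (∑ j, (A11 j k : ℝ) * lam j) * z k := by
            exact Finset.sum_congr rfl fun k _ => by rw [hlamsum k]
        _ = ∑ k, ∑ j, (A11 j k : ℝ) * lam j * z k := by
            exact Finset.sum_congr rfl fun k _ => by rw [Finset.sum_mul]
        _ = ∑ j, ∑ k, (A11 j k : ℝ) * lam j * z k := Finset.sum_comm
        _ = ∑ j, lam j * ∑ k, (A11 j k : ℝ) * z k := by
            refine Finset.sum_congr rfl fun j _ => ?_
            rw [Finset.mul_sum]
            exact Finset.sum_congr rfl fun k _ => by ring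
    rw [e1 x.1, e1 y]
    refine Finset.sum_le_sum fun j _ => ?_
    rcases Bool.eq_false_or_eq_true (ω j) with hωj | hωj
    · have h1 := hxeq j hωj
      have h2 := hy j
      have h3 : ∑ k, (A11 j k : ℝ) * x.1 k ≤ ∑ k, (A11 j k : ℝ) * y k := by linarith
      exact mul_le_mul_of_nonneg_left h3 (hlam0 j)
    · simp [hlamsupp j hωj]

/-- `F(P) = ⋃_{ω ∈ Ω} U_ω`; in particular, `F(P)` is the union of at most
`2^{m1}` polyhedra. -/
theorem stmt0 (m1 m2 n1 n2 : ℕ)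
    (A11 : Matrix (Fin m1) (Fin n1) ℚ) (A12 : Matrix (Fin m1) (Fin n2) ℚ)
    (A21 : Matrix (Fin m2) (Fin n1) ℚ) (A22 : Matrix (Fin m2) (Fin n2) ℚ)
    (b1 : Fin m1 → ℚ) (b2 : Fin m2 → ℚ)
    (c11 c21 : Fin n1 → ℚ) (c22 : Fin n2 → ℚ) :
    (BFeas m1 m2 n1 n2 A11 A12 A21 A22 b1 b2 c11 =
      ⋃ ω ∈ Omega m1 n1 A11 c11, Upoly m1 m2 n1 n2 A11 A12 A21 A22 b1 b2 ω) ∧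
    ∃ (q : ℕ) (Q : Fin q → Set ((Fin n1 → ℝ) × (Fin n2 → ℝ))),
      q ≤ 2 ^ m1 ∧ (∀ i, IsPolyhedron (Q i)) ∧
      BFeas m1 m2 n1 n2 A11 A12 A21 A22 b1 b2 c11 = ⋃ i, Q i := by
  classical
  have key := BFeas_eq_iUnion m1 m2 n1 n2 A11 A12 A21 A22 b1 b2 c11
  refine ⟨key, Fintype.card (Fin m1 → Bool),
    fun i => if (Fintype.equivFin (Fin m1 → Bool)).symm i ∈ Omega m1 n1 A11 c11
        then Upoly m1 m2 n1 n2 A11 A12 A21 A22 b1 b2 ((Fintype.equivFin (Fin m1 → Bool)).symm i)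
        else ∅, by simp, ?_, ?_⟩
  · intro i
    by_cases h : (Fintype.equivFin (Fin m1 → Bool)).symm i ∈ Omega m1 n1 A11 c11
    · simp only [if_pos h]
      exact isPolyhedron_Upoly m1 m2 n1 n2 A11 A12 A21 A22 b1 b2 _
    · simp only [if_neg h]
      exact isPolyhedron_empty
  · rw [key]
    ext x
    simp only [Set.mem_iUnion, exists_prop]
    constructor
    · rintro ⟨ω, hω, hx⟩
      refine ⟨Fintype.equivFin (Fin m1 → Bool) ω, ?_⟩
      simp only [Equiv.symm_apply_apply]
      rw [if_pos hω]
      exact hx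
    · rintro ⟨i, hx⟩
      by_cases h : (Fintype.equivFin (Fin m1 → Bool)).symm i ∈ Omega m1 n1 A11 c11
      · rw [if_pos h] at hx
        exact ⟨_, h, hx⟩
      · rw [if_neg h] at hx
        exact absurd hx (Set.notMem_empty x)
end
end

section
/- There exists a polynomial f in two variables with nonnegative integer coefficients such that the following holds for all dimensions m1, m2, n1, n2 and all rational data as in the context: letting n = n1 + n2 and σ be the maximum encoding size of an entry of A11, A12, A21, A22, b1, b2, if the bilevel LP (P) has an optimal solution, then it has an optimal solution (x̄1, x̄2) with all coordinates rational and size(x̄1) + size(x̄2) ≤ f(n, σ). -/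
noncomputable section

/-- The binary encoding size of a rational number `x = p/q` (`p`, `q` coprime):
`1 + ⌈log₂(|p|+1)⌉ + ⌈log₂(|q|+1)⌉`. -/
def ratSize (x : ℚ) : ℕ :=
  1 + Nat.clog 2 (x.num.natAbs + 1) + Nat.clog 2 (x.den + 1)

/-- The upper-level objective of `(P)`. -/
def BObj (n1 n2 : ℕ) (c21 : Fin n1 → ℚ) (c22 : Fin n2 → ℚ)
    (x : (Fin n1 → ℝ) × (Fin n2 → ℝ)) : ℝ :=
  ∑ k, (c21 k : ℝ) * x.1 k + ∑ k, (c22 k : ℝ) * x.2 k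

/-- `x` has a fraction representation with numerator bounded by `N`, denominator by `D`. -/
def RB (N D : ℕ) (x : ℚ) : Prop :=
  ∃ P Q : ℤ, 0 < Q ∧ |P| ≤ (N : ℤ) ∧ Q ≤ (D : ℤ) ∧ x * (Q : ℚ) = (P : ℚ)

lemma RB.mono {N D N' D' : ℕ} {x : ℚ} (h : RB N D x) (hN : N ≤ N') (hD : D ≤ D') :
    RB N' D' x := by
  obtain ⟨P, Q, h1, h2, h3, h4⟩ := h
  exact ⟨P, Q, h1, h2.trans (by exact_mod_cast hN), h3.trans (by exact_mod_cast hD), h4⟩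

lemma rb_of_ratSize {x : ℚ} {σ : ℕ} (h : ratSize x ≤ σ) : RB (2 ^ σ) (2 ^ σ) x := by
  refine ⟨x.num, x.den, by exact_mod_cast x.pos, ?_, ?_, by exact_mod_cast Rat.mul_den_eq_num x⟩
  · have h1 : Nat.clog 2 (x.num.natAbs + 1) ≤ σ := by unfold ratSize at h; omega
    have := (Nat.le_pow_clog one_lt_two (x.num.natAbs + 1)).trans
      (Nat.pow_le_pow_right (by norm_num) h1)
    rw [Int.abs_eq_natAbs]
    exact_mod_cast Nat.le_of_succ_le this
  · have h1 : Nat.clog 2 (x.den + 1) ≤ σ := by unfold ratSize at h; omega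
    have := (Nat.le_pow_clog one_lt_two (x.den + 1)).trans
      (Nat.pow_le_pow_right (by norm_num) h1)
    exact_mod_cast Nat.le_of_succ_le this

lemma ratSize_le_of_rb {x : ℚ} {N D : ℕ} (h : RB N D x) :
    ratSize x ≤ 1 + Nat.clog 2 (N + 1) + Nat.clog 2 (D + 1) := by
  obtain ⟨P, Q, hQ, hP, hQD, he⟩ := h
  -- cross-multiplied identity over ℤ
  have hqQ : (x.num : ℚ) * Q = (P : ℚ) * (x.den : ℚ) := by
    have hd : (x.den : ℚ) ≠ 0 := by exact_mod_cast x.den_nz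
    have hx : x = (x.num : ℚ) / (x.den : ℚ) := (Rat.num_div_den x).symm
    rw [hx] at he
    field_simp at he
    linarith [he]
  have hZ : x.num * Q = P * (x.den : ℤ) := by exact_mod_cast hqQ
  have hcop : IsCoprime (x.num) (x.den : ℤ) := by
    rw [Int.isCoprime_iff_gcd_eq_one]
    exact x.reduced
  have hdenQ : (x.den : ℤ) ∣ Q := by
    refine (hcop.symm).dvd_of_dvd_mul_left (show (x.den:ℤ) ∣ x.num * Q from ?_)
    exact ⟨P, by linarith [hZ]⟩
  have hnumP : x.num ∣ P := by
    refine hcop.dvd_of_dvd_mul_left (show x.num ∣ (x.den:ℤ) * P from ?_)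
    exact ⟨Q, by linarith [hZ]⟩
  have hden : (x.den : ℤ) ≤ (D : ℤ) := le_trans (Int.le_of_dvd hQ hdenQ) hQD
  have hnum : (x.num.natAbs : ℤ) ≤ (N : ℤ) := by
    rcases eq_or_ne P 0 with hP0 | hP0
    · subst hP0
      have : x * Q = 0 := by rw [he]; norm_num
      have hx0 : x = 0 := by
        rcases mul_eq_zero.1 this with h | h
        · exact h
        · exact absurd h (by exact_mod_cast hQ.ne')
      simp [hx0]
    · have := Int.le_of_dvd (abs_pos.2 hP0) ((abs_dvd _ _).2 ((dvd_abs _ _).2 hnumP))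
      calc (x.num.natAbs : ℤ) = |x.num| := (Int.abs_eq_natAbs _).symm
        _ ≤ |P| := this
        _ ≤ N := hP
  unfold ratSize
  have h1 : x.num.natAbs + 1 ≤ N + 1 := by omega
  have h2 : x.den + 1 ≤ D + 1 := by exact_mod_cast by omega
  have := Nat.clog_mono_right 2 h1
  have := Nat.clog_mono_right 2 h2
  omega

lemma RB.mul {N₁ D₁ N₂ D₂ : ℕ} {x y : ℚ} (hx : RB N₁ D₁ x) (hy : RB N₂ D₂ y) :
    RB (N₁ * N₂) (D₁ * D₂) (x * y) := by
  obtain ⟨P₁, Q₁, a1, a2, a3, a4⟩ := hx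
  obtain ⟨P₂, Q₂, b1, b2, b3, b4⟩ := hy
  refine ⟨P₁ * P₂, Q₁ * Q₂, mul_pos a1 b1, ?_, ?_, ?_⟩
  · rw [abs_mul]; push_cast
    exact mul_le_mul a2 b2 (abs_nonneg _) (by positivity)
  · push_cast
    exact mul_le_mul a3 b3 b1.le (by positivity)
  · push_cast
    calc x * y * ((Q₁:ℚ) * Q₂) = (x * Q₁) * (y * Q₂) := by ring
      _ = (P₁ : ℚ) * P₂ := by rw [a4, b4]

lemma RB.div {N₁ D₁ N₂ D₂ : ℕ} {x y : ℚ} (hx : RB N₁ D₁ x) (hy : RB N₂ D₂ y) (hy0 : y ≠ 0) :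
    RB (N₁ * D₂) (N₂ * D₁) (x / y) := by
  obtain ⟨P₁, Q₁, a1, a2, a3, a4⟩ := hx
  obtain ⟨P₂, Q₂, b1, b2, b3, b4⟩ := hy
  have hP₂ : P₂ ≠ 0 := by
    intro h; subst h
    have : y * Q₂ = 0 := by rw [b4]; norm_num
    rcases mul_eq_zero.1 this with h | h
    exacts [hy0 h, absurd h (by exact_mod_cast b1.ne')]
  have hs1 : |P₂.sign| = 1 := by
    rcases hP₂.lt_or_gt with h | h
    · simp [Int.sign_eq_neg_one_of_neg h]
    · simp [Int.sign_eq_one_of_pos h]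
  have hsgnZ : |P₂| = P₂.sign * P₂ := by
    rcases hP₂.lt_or_gt with h | h
    · rw [Int.sign_eq_neg_one_of_neg h, abs_of_neg h]; ring
    · rw [Int.sign_eq_one_of_pos h, abs_of_pos h]; ring
  refine ⟨P₂.sign * P₁ * Q₂, |P₂| * Q₁, mul_pos (abs_pos.2 hP₂) a1, ?_, ?_, ?_⟩
  · rw [abs_mul, abs_mul, hs1, one_mul, abs_of_pos b1]
    push_cast
    exact mul_le_mul a2 b3 b1.le (by positivity)
  · push_cast
    have h1 : |P₂| ≤ (N₂ : ℤ) := b2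
    exact mul_le_mul h1 a3 a1.le (by positivity)
  · have hss : |(P₂ : ℚ)| = (P₂.sign : ℚ) * (P₂ : ℚ) := by exact_mod_cast hsgnZ
    push_cast
    rw [div_mul_eq_mul_div, div_eq_iff hy0, hss]
    linear_combination ((P₂.sign : ℚ) * (P₂ : ℚ)) * a4 - ((P₂.sign : ℚ) * (P₁ : ℚ)) * b4

open Finset in
lemma RB.sum {ι : Type*} [Fintype ι] {N D : ℕ} {x : ι → ℚ} (h : ∀ i, RB N D (x i)) :
    RB (Fintype.card ι * N * D ^ Fintype.card ι) (D ^ Fintype.card ι) (∑ i, x i) := by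
  rcases isEmpty_or_nonempty ι with hE | hNE
  · refine ⟨0, 1, one_pos, by simp, ?_, by simp⟩
    simp [Fintype.card_eq_zero]
  classical
  choose P Q hQ hP hQD he using h
  have hD1 : (1 : ℤ) ≤ (D : ℤ) := le_trans (hQ (Classical.arbitrary ι)) (hQD _)
  refine ⟨∑ i, P i * ∏ j ∈ Finset.univ.erase i, Q j, ∏ i, Q i,
    Finset.prod_pos (fun i _ => hQ i), ?_, ?_, ?_⟩
  · calc |∑ i, P i * ∏ j ∈ Finset.univ.erase i, Q j|
        ≤ ∑ i, |P i * ∏ j ∈ Finset.univ.erase i, Q j| := Finset.abs_sum_le_sum_abs _ _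
      _ ≤ ∑ _i : ι, (N : ℤ) * (D : ℤ) ^ Fintype.card ι := by
          refine Finset.sum_le_sum (fun i _ => ?_)
          rw [abs_mul, Finset.abs_prod]
          refine mul_le_mul (hP i) ?_ (by positivity) (by positivity)
          calc ∏ j ∈ Finset.univ.erase i, |Q j|
              ≤ ∏ _j ∈ Finset.univ.erase i, (D : ℤ) := by
                refine Finset.prod_le_prod (fun j _ => abs_nonneg _) (fun j _ => ?_)
                rw [abs_of_pos (hQ j)]; exact hQD j
            _ = (D : ℤ) ^ (Finset.univ.erase i).card := by rw [Finset.prod_const]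
            _ ≤ (D : ℤ) ^ Fintype.card ι := by
                refine pow_le_pow_right₀ hD1 ?_
                exact le_trans (Finset.card_le_card (Finset.erase_subset _ _)) (by simp)
      _ = ((Fintype.card ι * N * D ^ Fintype.card ι : ℕ) : ℤ) := by
          rw [Finset.sum_const, Finset.card_univ]; push_cast; ring
  · calc ∏ i, Q i ≤ ∏ _i : ι, (D : ℤ) :=
          Finset.prod_le_prod (fun i _ => (hQ i).le) (fun i _ => hQD i)
      _ = ((D ^ Fintype.card ι : ℕ) : ℤ) := by
          rw [Finset.prod_const, Finset.card_univ]; push_cast; ring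
  · push_cast
    rw [Finset.sum_mul]
    refine Finset.sum_congr rfl (fun i _ => ?_)
    have hsplit := Finset.mul_prod_erase Finset.univ (fun j => (Q j : ℚ)) (Finset.mem_univ i)
    calc x i * ∏ j, (Q j : ℚ)
        = (x i * (Q i : ℚ)) * ∏ j ∈ Finset.univ.erase i, (Q j : ℚ) := by
          rw [← hsplit]; ring
      _ = (P i : ℚ) * ∏ j ∈ Finset.univ.erase i, (Q j : ℚ) := by rw [he i]

open Finset Equiv in
lemma RB.det {ι : Type*} [Fintype ι] [DecidableEq ι] {N D : ℕ} {M : Matrix ι ι ℚ}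
    (h : ∀ i j, RB N D (M i j)) :
    RB ((Fintype.card ι).factorial * N ^ Fintype.card ι * D ^ (Fintype.card ι * Fintype.card ι))
      (D ^ (Fintype.card ι * Fintype.card ι)) M.det := by
  rcases isEmpty_or_nonempty ι with hE | hNE
  · refine ⟨1, 1, one_pos, ?_, ?_, ?_⟩
    · simp [Fintype.card_eq_zero]
    · simp [Fintype.card_eq_zero]
    · rw [Matrix.det_isEmpty]; norm_num
  classical
  choose P Q hQ hP hQD he using fun i j => h i j
  have hD1 : (1 : ℤ) ≤ (D : ℤ) := by
    have i := Classical.arbitrary ι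
    exact le_trans (hQ i i) (hQD i i)
  set r := Fintype.card ι with hr
  set Rem : Equiv.Perm ι → ℤ := fun σ => ∏ j, ∏ i ∈ Finset.univ.erase (σ j), Q i j with hRem
  have key : ∀ σ : Equiv.Perm ι, (∏ j, Q (σ j) j) * Rem σ = ∏ j, ∏ i, Q i j := by
    intro σ
    rw [hRem, ← Finset.prod_mul_distrib]
    exact Finset.prod_congr rfl (fun j _ =>
      Finset.mul_prod_erase Finset.univ (fun i => Q i j) (Finset.mem_univ (σ j)))
  have hRemBound : ∀ σ : Equiv.Perm ι, |Rem σ| ≤ (D : ℤ) ^ (r * r) := by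
    intro σ
    rw [hRem]
    calc |∏ j, ∏ i ∈ Finset.univ.erase (σ j), Q i j|
        = ∏ j, |∏ i ∈ Finset.univ.erase (σ j), Q i j| := Finset.abs_prod _ _
      _ ≤ ∏ _j : ι, (D : ℤ) ^ r := by
          refine Finset.prod_le_prod (fun j _ => abs_nonneg _) (fun j _ => ?_)
          rw [Finset.abs_prod]
          calc ∏ i ∈ Finset.univ.erase (σ j), |Q i j|
              ≤ ∏ _i ∈ Finset.univ.erase (σ j), (D : ℤ) := by
                refine Finset.prod_le_prod (fun i _ => abs_nonneg _) (fun i _ => ?_)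
                rw [abs_of_pos (hQ i j)]; exact hQD i j
            _ = (D : ℤ) ^ (Finset.univ.erase (σ j)).card := by rw [Finset.prod_const]
            _ ≤ (D : ℤ) ^ r := by
                refine pow_le_pow_right₀ hD1 ?_
                exact le_trans (Finset.card_le_card (Finset.erase_subset _ _)) (by simp [hr])
      _ = (D : ℤ) ^ (r * r) := by rw [Finset.prod_const, Finset.card_univ, ← hr, ← pow_mul, Nat.mul_comm]
  refine ⟨∑ σ : Equiv.Perm ι, (Equiv.Perm.sign σ : ℤ) * ((∏ j, P (σ j) j) * Rem σ),
    ∏ j, ∏ i, Q i j, Finset.prod_pos (fun j _ => Finset.prod_pos (fun i _ => hQ i j)), ?_, ?_, ?_⟩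
  · calc |∑ σ : Equiv.Perm ι, (Equiv.Perm.sign σ : ℤ) * ((∏ j, P (σ j) j) * Rem σ)|
        ≤ ∑ σ : Equiv.Perm ι, |(Equiv.Perm.sign σ : ℤ) * ((∏ j, P (σ j) j) * Rem σ)| :=
          Finset.abs_sum_le_sum_abs _ _
      _ ≤ ∑ _σ : Equiv.Perm ι, (N : ℤ) ^ r * (D : ℤ) ^ (r * r) := by
          refine Finset.sum_le_sum (fun σ _ => ?_)
          rw [abs_mul, abs_mul]
          have hsgn : |((Equiv.Perm.sign σ : ℤˣ) : ℤ)| = 1 := by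
            rw [Int.abs_eq_natAbs, Int.units_natAbs]; rfl
          rw [hsgn, one_mul]
          refine mul_le_mul ?_ (hRemBound σ) (abs_nonneg _) (by positivity)
          rw [Finset.abs_prod]
          calc ∏ j, |P (σ j) j| ≤ ∏ _j : ι, (N : ℤ) :=
              Finset.prod_le_prod (fun j _ => abs_nonneg _) (fun j _ => hP _ _)
            _ = (N : ℤ) ^ r := by rw [Finset.prod_const, Finset.card_univ]
      _ = ((r.factorial * N ^ r * D ^ (r * r) : ℕ) : ℤ) := by
          rw [Finset.sum_const, Finset.card_univ, Fintype.card_perm, ← hr]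
          push_cast; ring
  · calc ∏ j, ∏ i, Q i j ≤ ∏ _j : ι, (D : ℤ) ^ r := by
          refine Finset.prod_le_prod (fun j _ => Finset.prod_pos (fun i _ => hQ i j) |>.le)
            (fun j _ => ?_)
          calc ∏ i, Q i j ≤ ∏ _i : ι, (D : ℤ) :=
              Finset.prod_le_prod (fun i _ => (hQ i j).le) (fun i _ => hQD i j)
            _ = (D : ℤ) ^ r := by rw [Finset.prod_const, Finset.card_univ]
      _ = ((D ^ (r * r) : ℕ) : ℤ) := by
          rw [Finset.prod_const, Finset.card_univ, ← hr, ← pow_mul, Nat.mul_comm]; push_cast; ring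
  · rw [Matrix.det_apply']
    push_cast
    rw [Finset.sum_mul]
    refine Finset.sum_congr rfl (fun σ _ => ?_)
    have key' := key σ
    rw [hRem] at key'
    have keyQ : (∏ j, ((Q (σ j) j : ℤ) : ℚ)) * (∏ j, ∏ i ∈ Finset.univ.erase (σ j), ((Q i j : ℤ) : ℚ)) = ∏ j, ∏ i, ((Q i j : ℤ) : ℚ) := by
      exact_mod_cast key'
    push_cast
    calc (Equiv.Perm.sign σ : ℚ) * (∏ j, M (σ j) j) * (∏ j, ∏ i, (Q i j : ℚ))
        = (Equiv.Perm.sign σ : ℚ) * ((∏ j, M (σ j) j) * ((∏ j, (Q (σ j) j : ℚ)) * (∏ j, ∏ i ∈ Finset.univ.erase (σ j), (Q i j : ℚ)))) := by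
          rw [← keyQ]; ring
      _ = (Equiv.Perm.sign σ : ℚ) * ((∏ j, (M (σ j) j * (Q (σ j) j : ℚ))) * (∏ j, ∏ i ∈ Finset.univ.erase (σ j), (Q i j : ℚ))) := by
          rw [Finset.prod_mul_distrib]; ring
      _ = (Equiv.Perm.sign σ : ℚ) * ((∏ j, (P (σ j) j : ℚ)) * (∏ j, ∏ i ∈ Finset.univ.erase (σ j), (Q i j : ℚ))) := by
          rw [Finset.prod_congr rfl (fun j _ => he (σ j) j)]
      _ = (Equiv.Perm.sign σ : ℚ) * ((∏ j, (P (σ j) j : ℚ)) * ((Rem σ : ℤ) : ℚ)) := by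
          rw [hRem]; push_cast; ring

def gB (n s : ℕ) : ℕ := n + 2 * s + 2 * s * n
def hB (n s : ℕ) : ℕ := n * n + gB n s * n + gB n s * (n * n)
def eB (n s : ℕ) : ℕ := n + (gB n s + 2 * hB n s) * (n + 1)
def keyBound (n s : ℕ) : ℕ := n * (2 * eB n s + 3)

lemma clog_two_pow_succ (e : ℕ) : Nat.clog 2 (2 ^ e + 1) ≤ e + 1 := by
  rw [Nat.clog_le_iff_le_pow one_lt_two]
  have : 2 ^ (e + 1) = 2 ^ e + 2 ^ e := by ring
  have h1 : 1 ≤ 2 ^ e := Nat.one_le_two_pow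
  omega

lemma ratSize_le_pow2 {x : ℚ} {e : ℕ} (h : RB (2 ^ e) (2 ^ e) x) : ratSize x ≤ 2 * e + 3 := by
  have := ratSize_le_of_rb h
  have h2 := clog_two_pow_succ e
  omega

/-- Key lemma: a rational linear system (entries of size ≤ σ) that is solvable over ℝ has a
rational solution of polynomially bounded size. -/
lemma key_lemma {ι κ : Type*} [Fintype ι] [Fintype κ]
    (A : Matrix ι κ ℚ) (b : ι → ℚ) (σ : ℕ)
    (hA : ∀ i j, ratSize (A i j) ≤ σ) (hb : ∀ i, ratSize (b i) ≤ σ)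
    (x : κ → ℝ) (hx : ∀ i, ∑ j, (A i j : ℝ) * x j = (b i : ℝ)) :
    ∃ y : κ → ℚ, (∀ i, ∑ j, A i j * y j = b i) ∧
      ∑ j, ratSize (y j) ≤ keyBound (Fintype.card κ) σ := by
  classical
  set n := Fintype.card κ with hn
  obtain ⟨t, hts, hspan, hli⟩ := exists_linearIndependent ℚ (Set.range fun i => A i)
  haveI : Fintype t := (hli.set_finite_of_isNoetherian).fintype
  have hcard : Fintype.card t ≤ n := by
    have := hli.fintype_card_le_finrank
    rwa [Module.finrank_pi] at this
  have hrep : ∀ v : t, ∃ i, A i = (v : κ → ℚ) := fun v => hts v.2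
  choose rep hrepEq using hrep
  set B : Matrix t κ ℚ := fun v j => (v : κ → ℚ) j with hB'
  have hliB : LinearIndependent ℚ (fun v : t => B v) := hli
  set G : Matrix t t ℚ := B * B.transpose with hG
  -- G is invertible
  have hGinj : Function.Injective G.mulVec := by
    have hker : ∀ u : t → ℚ, G.mulVec u = 0 → u = 0 := by
      intro u hu
      have h1 : dotProduct u (G.mulVec u) = 0 := by rw [hu, dotProduct_zero]
      have h2 : dotProduct u (G.mulVec u)
          = dotProduct (Matrix.vecMul u B) (Matrix.vecMul u B) := by
        rw [hG, ← Matrix.mulVec_mulVec, Matrix.dotProduct_mulVec, Matrix.mulVec_transpose]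
      have h3 : ∀ j, Matrix.vecMul u B j = 0 := by
        rw [h2] at h1
        unfold dotProduct at h1
        intro j
        have hnn : ∀ k ∈ Finset.univ, (0:ℚ) ≤ Matrix.vecMul u B k * Matrix.vecMul u B k :=
          fun k _ => mul_self_nonneg _
        have := (Finset.sum_eq_zero_iff_of_nonneg hnn).1 h1 j (Finset.mem_univ j)
        exact mul_self_eq_zero.1 this
      have hinjB := Matrix.vecMul_injective_iff.mpr hliB
      have : Matrix.vecMul u B = Matrix.vecMul 0 B := by
        funext j; rw [h3 j, Matrix.zero_vecMul]; rfl
      exact hinjB this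
    intro u u' huu
    have : G.mulVec (u - u') = 0 := by
      rw [Matrix.mulVec_sub, huu, sub_self]
    have := hker _ this
    exact sub_eq_zero.1 this
  have hGdet : G.det ≠ 0 := by
    have := Matrix.mulVec_injective_iff_isUnit.mp hGinj
    exact (Matrix.isUnit_iff_isUnit_det G).1 this |>.ne_zero
  set bt : t → ℚ := fun v => b (rep v) with hbt
  set z : t → ℚ := G.det⁻¹ • G.cramer bt with hz
  have hGz : G.mulVec z = bt := by
    rw [hz, Matrix.mulVec_smul, Matrix.mulVec_cramer, smul_smul, inv_mul_cancel₀ hGdet, one_smul]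
  set y : κ → ℚ := B.transpose.mulVec z with hy
  have hBy : B.mulVec y = bt := by
    rw [hy, Matrix.mulVec_mulVec, ← hG, hGz]
  -- y solves the full system
  have hsolves : ∀ i, ∑ j, A i j * y j = b i := by
    have φdef : ∀ q : ℚ, ∀ r : ℝ, q • r = (q : ℝ) * r := fun q r => Rat.smul_def q r
    set φ : (κ → ℚ) →ₗ[ℚ] ℝ :=
      { toFun := fun w => ∑ j, (w j : ℝ) * x j
        map_add' := by
          intro w₁ w₂
          rw [← Finset.sum_add_distrib]
          refine Finset.sum_congr rfl (fun j _ => ?_)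
          simp only [Pi.add_apply]
          push_cast; ring
        map_smul' := by
          intro q w
          simp only [RingHom.id_apply, φdef, Finset.mul_sum]
          refine Finset.sum_congr rfl (fun j _ => ?_)
          simp only [Pi.smul_apply, smul_eq_mul]
          push_cast; ring } with hφ
    set ψ : (κ → ℚ) →ₗ[ℚ] ℝ :=
      { toFun := fun w => ((∑ j, w j * y j : ℚ) : ℝ)
        map_add' := by
          intro w₁ w₂
          have hq : (∑ j, (w₁ + w₂) j * y j) = (∑ j, w₁ j * y j) + (∑ j, w₂ j * y j) := by
            rw [← Finset.sum_add_distrib]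
            exact Finset.sum_congr rfl (fun j _ => by simp only [Pi.add_apply]; ring)
          show ((∑ j, (w₁ + w₂) j * y j : ℚ) : ℝ) = ((∑ j, w₁ j * y j : ℚ) : ℝ) + ((∑ j, w₂ j * y j : ℚ) : ℝ)
          rw [hq]; push_cast; ring
        map_smul' := by
          intro q w
          have hq : (∑ j, (q • w) j * y j) = q * ∑ j, w j * y j := by
            rw [Finset.mul_sum]
            exact Finset.sum_congr rfl (fun j _ => by
              simp only [Pi.smul_apply, smul_eq_mul]; ring)
          show ((∑ j, (q • w) j * y j : ℚ) : ℝ) = (RingHom.id ℚ q) • ((∑ j, w j * y j : ℚ) : ℝ)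
          rw [RingHom.id_apply, hq, φdef]
          push_cast; ring } with hψ
    have hagree : Set.EqOn φ ψ t := by
      intro v hv
      have h1 : φ v = (b (rep ⟨v, hv⟩) : ℝ) := by
        rw [hφ]
        simp only [LinearMap.coe_mk, AddHom.coe_mk]
        have := hx (rep ⟨v, hv⟩)
        rw [hrepEq ⟨v, hv⟩] at this
        exact this
      have h2 : ψ v = ((∑ j, v j * y j : ℚ) : ℝ) := rfl
      have h3 : ∑ j, v j * y j = bt ⟨v, hv⟩ := by
        have := congrFun hBy ⟨v, hv⟩
        rw [Matrix.mulVec, dotProduct] at this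
        exact this
      rw [h1, h2, h3, hbt]
    intro i
    have hmem : A i ∈ Submodule.span ℚ t := by
      rw [hspan]
      exact Submodule.subset_span ⟨i, rfl⟩
    have := LinearMap.eqOn_span hagree hmem
    have hφi : φ (A i) = (b i : ℝ) := hx i
    have hψi : ψ (A i) = ((∑ j, A i j * y j : ℚ) : ℝ) := rfl
    rw [hφi, hψi] at this
    exact_mod_cast this.symm
  refine ⟨y, hsolves, ?_⟩
  -- Size bound
  set g := gB n σ with hg
  set hh := hB n σ with hhh
  set e := eB n σ with he
  have hrbB : ∀ (v : t) (j : κ), RB (2 ^ σ) (2 ^ σ) (B v j) := by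
    intro v j
    have : B v j = A (rep v) j := by rw [hB']; rw [hrepEq v]
    rw [this]
    exact rb_of_ratSize (hA _ _)
  have hng : n ≤ g ∧ 2 * σ ≤ g ∧ σ ≤ g := by
    constructor
    · rw [hg]; unfold gB; omega
    constructor
    · rw [hg]; unfold gB; omega
    · rw [hg]; unfold gB; omega
  have hrbG : ∀ v w : t, RB (2 ^ g) (2 ^ g) (G v w) := by
    intro v w
    have hGvw : G v w = ∑ j, B v j * B w j := by
      rw [hG, Matrix.mul_apply]
      exact Finset.sum_congr rfl (fun j _ => rfl)
    rw [hGvw]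
    have hterm : ∀ j, RB (2 ^ σ * 2 ^ σ) (2 ^ σ * 2 ^ σ) (B v j * B w j) :=
      fun j => (hrbB v j).mul (hrbB w j)
    have := RB.sum (N := 2 ^ σ * 2 ^ σ) (D := 2 ^ σ * 2 ^ σ) hterm
    rw [← hn] at this
    refine this.mono ?_ ?_
    · have h1 : (2:ℕ) ^ σ * 2 ^ σ = 2 ^ (2 * σ) := by rw [← pow_add, two_mul]
      rw [h1, ← pow_mul]
      calc n * 2 ^ (2 * σ) * 2 ^ (2 * σ * n)
          ≤ 2 ^ n * 2 ^ (2 * σ) * 2 ^ (2 * σ * n) :=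
            Nat.mul_le_mul (Nat.mul_le_mul (Nat.lt_two_pow_self (n := n)).le (le_refl _)) (le_refl _)
        _ = 2 ^ g := by rw [← pow_add, ← pow_add, hg]; rfl
    · have h1 : (2:ℕ) ^ σ * 2 ^ σ = 2 ^ (2 * σ) := by rw [← pow_add, two_mul]
      rw [h1, ← pow_mul]
      exact Nat.pow_le_pow_right (by norm_num) (by rw [hg]; unfold gB; omega)
  have hrbbt : ∀ v : t, RB (2 ^ g) (2 ^ g) (bt v) := by
    intro v
    exact (rb_of_ratSize (hb (rep v))).mono (Nat.pow_le_pow_right (by norm_num) hng.2.2)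
      (Nat.pow_le_pow_right (by norm_num) hng.2.2)
  -- determinant bounds
  have hdetBound : ∀ M : Matrix t t ℚ, (∀ v w, RB (2 ^ g) (2 ^ g) (M v w)) →
      RB (2 ^ hh) (2 ^ hh) M.det := by
    intro M hM
    set r := Fintype.card t with hr
    have := RB.det hM
    rw [← hr] at this
    have hfact : r.factorial ≤ 2 ^ (n * n) := by
      calc r.factorial ≤ r ^ r := Nat.factorial_le_pow r
        _ ≤ (2 ^ n) ^ r := Nat.pow_le_pow_left (hcard.trans (Nat.lt_two_pow_self (n := n)).le) r
        _ = 2 ^ (n * r) := by rw [← pow_mul]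
        _ ≤ 2 ^ (n * n) := Nat.pow_le_pow_right (by norm_num) (Nat.mul_le_mul_left n hcard)
    refine this.mono ?_ ?_
    · calc r.factorial * (2 ^ g) ^ r * (2 ^ g) ^ (r * r)
          ≤ 2 ^ (n * n) * (2 ^ g) ^ n * (2 ^ g) ^ (n * n) := by
            refine Nat.mul_le_mul (Nat.mul_le_mul hfact ?_) ?_
            · exact Nat.pow_le_pow_right (by positivity) hcard
            · exact Nat.pow_le_pow_right (by positivity) (Nat.mul_le_mul hcard hcard)
        _ = 2 ^ hh := by rw [← pow_mul, ← pow_mul, ← pow_add, ← pow_add, hhh]; rfl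
    · calc (2 ^ g) ^ (r * r) ≤ (2 ^ g) ^ (n * n) :=
          Nat.pow_le_pow_right (by positivity) (Nat.mul_le_mul hcard hcard)
        _ ≤ 2 ^ hh := by
            rw [← pow_mul]
            exact Nat.pow_le_pow_right (by norm_num) (by rw [hg, hhh]; unfold hB; omega)
  have hrbdetG : RB (2 ^ hh) (2 ^ hh) G.det := hdetBound G hrbG
  have hrbz : ∀ v : t, RB (2 ^ (2 * hh)) (2 ^ (2 * hh)) (z v) := by
    intro v
    have hzv : z v = G.cramer bt v / G.det := by
      rw [hz]; simp only [Pi.smul_apply, smul_eq_mul]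
      rw [div_eq_inv_mul]
    have hcram : RB (2 ^ hh) (2 ^ hh) (G.cramer bt v) := by
      rw [Matrix.cramer_apply]
      refine hdetBound _ ?_
      intro a c
      rw [Matrix.updateCol_apply]
      by_cases hcv : c = v
      · simp only [hcv, if_pos rfl]; exact hrbbt a
      · simp only [if_neg hcv]; exact hrbG a c
    rw [hzv]
    have := hcram.div hrbdetG hGdet
    refine this.mono ?_ ?_ <;> rw [← pow_add] <;> rw [two_mul]
  have hrby : ∀ j, RB (2 ^ e) (2 ^ e) (y j) := by
    intro j
    have hyj : y j = ∑ v : t, B v j * z v := by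
      rw [hy, Matrix.mulVec, dotProduct]
      exact Finset.sum_congr rfl (fun v _ => by rw [Matrix.transpose_apply])
    rw [hyj]
    have hterm : ∀ v : t, RB (2 ^ σ * 2 ^ (2 * hh)) (2 ^ σ * 2 ^ (2 * hh)) (B v j * z v) :=
      fun v => (hrbB v j).mul (hrbz v)
    have := RB.sum hterm
    set r := Fintype.card t with hr
    have hgh : σ + 2 * hh ≤ g + 2 * hh := by omega
    refine this.mono ?_ ?_
    · calc r * (2 ^ σ * 2 ^ (2 * hh)) * (2 ^ σ * 2 ^ (2 * hh)) ^ r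
          ≤ 2 ^ n * 2 ^ (g + 2 * hh) * 2 ^ ((g + 2 * hh) * n) := by
            refine Nat.mul_le_mul (Nat.mul_le_mul ?_ ?_) ?_
            · exact (hcard.trans (Nat.lt_two_pow_self (n := n)).le)
            · rw [← pow_add]; exact Nat.pow_le_pow_right (by norm_num) hgh
            · rw [← pow_add, ← pow_mul]
              exact Nat.pow_le_pow_right (by norm_num)
                (Nat.mul_le_mul hgh hcard)
        _ ≤ 2 ^ e := by
            rw [← pow_add, ← pow_add]
            refine Nat.pow_le_pow_right (by norm_num) ?_
            have heq : e = n + (g + 2 * hh) + (g + 2 * hh) * n := by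
              rw [he, hg, hhh]; unfold eB; ring
            omega
    · calc (2 ^ σ * 2 ^ (2 * hh)) ^ r ≤ 2 ^ ((g + 2 * hh) * n) := by
            rw [← pow_add, ← pow_mul]
            exact Nat.pow_le_pow_right (by norm_num) (Nat.mul_le_mul hgh hcard)
        _ ≤ 2 ^ e := by
            refine Nat.pow_le_pow_right (by norm_num) ?_
            have heq : e = n + (g + 2 * hh) + (g + 2 * hh) * n := by
              rw [he, hg, hhh]; unfold eB; ring
            omega
  calc ∑ j, ratSize (y j) ≤ ∑ _j : κ, (2 * e + 3) :=
        Finset.sum_le_sum (fun j _ => ratSize_le_pow2 (hrby j))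
    _ = n * (2 * e + 3) := by rw [Finset.sum_const, Finset.card_univ, smul_eq_mul, ← hn]
    _ = keyBound n σ := by rw [he]; rfl

/-- Purification: if a linear objective attains its minimum over a set `F` squeezed between a
rational polyhedron's tightness structure, then there is a rational optimal point of bounded
size. -/
lemma purify {ι κ : Type*} [Fintype ι] [Fintype κ]
    (A : Matrix ι κ ℚ) (b : ι → ℚ) (σ : ℕ)
    (hA : ∀ i j, ratSize (A i j) ≤ σ) (hb : ∀ i, ratSize (b i) ≤ σ)
    (F : Set (κ → ℝ)) (c : κ → ℝ)
    (hFfeas : ∀ x ∈ F, ∀ i, (b i : ℝ) ≤ ∑ j, (A i j : ℝ) * x j) :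
    ∀ x : κ → ℝ, x ∈ F →
      (∀ y ∈ F, ∑ j, c j * x j ≤ ∑ j, c j * y j) →
      (∀ z : κ → ℝ, (∀ i, (b i : ℝ) ≤ ∑ j, (A i j : ℝ) * z j) →
        (∀ i, (∑ j, (A i j : ℝ) * x j) = (b i : ℝ) → (∑ j, (A i j : ℝ) * z j) = (b i : ℝ)) →
        z ∈ F) →
      ∃ y : κ → ℚ, (fun j => (y j : ℝ)) ∈ F ∧
        (∀ z ∈ F, ∑ j, c j * (y j : ℝ) ≤ ∑ j, c j * z j) ∧
        ∑ j, ratSize (y j) ≤ keyBound (Fintype.card κ) σ := by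
  classical
  set Ax : (κ → ℝ) → ι → ℝ := fun x i => ∑ j, (A i j : ℝ) * x j with hAx
  have hlin : ∀ (x z : κ → ℝ) (t : ℝ) (i : ι),
      Ax (fun j => x j + t * (z j - x j)) i = Ax x i + t * (Ax z i - Ax x i) := by
    intro x z t i
    rw [hAx]
    simp only
    have : ∀ j, (A i j : ℝ) * (x j + t * (z j - x j))
        = (A i j : ℝ) * x j + t * ((A i j : ℝ) * z j - (A i j : ℝ) * x j) := fun j => by ring
    rw [Finset.sum_congr rfl (fun j _ => this j), Finset.sum_add_distrib]
    congr 1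
    rw [← Finset.mul_sum, Finset.sum_sub_distrib]
  have hobjlin : ∀ (x z : κ → ℝ) (t : ℝ),
      (∑ j, c j * (x j + t * (z j - x j))) = ∑ j, c j * x j + t * ((∑ j, c j * z j) - ∑ j, c j * x j) := by
    intro x z t
    have : ∀ j, c j * (x j + t * (z j - x j)) = c j * x j + t * (c j * z j - c j * x j) :=
      fun j => by ring
    rw [Finset.sum_congr rfl (fun j _ => this j), Finset.sum_add_distrib]
    congr 1
    rw [← Finset.mul_sum, Finset.sum_sub_distrib]
  -- the "Q membership" lemma: tightness-preserving feasible points are in F and optimal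
  have Qmember : ∀ x ∈ F, (∀ y ∈ F, ∑ j, c j * x j ≤ ∑ j, c j * y j) →
      (∀ z : κ → ℝ, (∀ i, (b i : ℝ) ≤ Ax z i) →
        (∀ i, Ax x i = (b i : ℝ) → Ax z i = (b i : ℝ)) → z ∈ F) →
      ∀ z : κ → ℝ, (∀ i, (b i : ℝ) ≤ Ax z i) →
        (∀ i, Ax x i = (b i : ℝ) → Ax z i = (b i : ℝ)) →
        z ∈ F ∧ (∑ j, c j * z j) = ∑ j, c j * x j := by
    intro x hxF hopt hcl z hzfeas hzpers
    refine ⟨hcl z hzfeas hzpers, ?_⟩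
    set S : Finset ι := Finset.univ.filter (fun i => Ax x i ≠ (b i : ℝ)) with hS
    set ε : ℝ := if hSne : S.Nonempty
      then min 1 (S.inf' hSne (fun i => (Ax x i - b i) / (|Ax z i - Ax x i| + 1)))
      else 1 with hε
    have hslack : ∀ i ∈ S, 0 < Ax x i - b i := by
      intro i hi
      rw [hS, Finset.mem_filter] at hi
      have h1 := hFfeas x hxF i
      have : (b i : ℝ) < Ax x i := lt_of_le_of_ne h1 (Ne.symm hi.2)
      linarith
    have hεpos : 0 < ε := by
      rw [hε]
      split_ifs with hSne
      · refine lt_min one_pos ?_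
        rw [Finset.lt_inf'_iff]
        intro i hi
        exact div_pos (hslack i hi) (by positivity)
      · exact one_pos
    have hεbound : ∀ i ∈ S, ε * |Ax z i - Ax x i| ≤ Ax x i - b i := by
      intro i hi
      have hSne : S.Nonempty := ⟨i, hi⟩
      have h1 : ε ≤ (Ax x i - b i) / (|Ax z i - Ax x i| + 1) := by
        rw [hε]
        simp only [dif_pos hSne]
        exact le_trans (min_le_right _ _) (S.inf'_le _ hi) |>.trans (le_refl _)
      have h2 : (0:ℝ) < |Ax z i - Ax x i| + 1 := by positivity
      have h3 : ε * (|Ax z i - Ax x i| + 1) ≤ Ax x i - b i := by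
        rw [← div_mul_cancel₀ (Ax x i - (b i:ℝ)) h2.ne']
        exact mul_le_mul_of_nonneg_right h1 h2.le
      nlinarith [abs_nonneg (Ax z i - Ax x i), hεpos]
    -- x ± ε (z - x) are feasible and tightness-preserving
    have hmove : ∀ s : ℝ, s = ε ∨ s = -ε → (fun j => x j + s * (z j - x j)) ∈ F := by
      intro s hs
      refine hcl _ ?_ ?_
      · intro i
        rw [hlin x z s i]
        by_cases hi : Ax x i = (b i : ℝ)
        · have h0 : Ax z i = (b i : ℝ) := hzpers i hi
          rw [hi, h0]; simp
        · have hiS : i ∈ S := by rw [hS, Finset.mem_filter]; exact ⟨Finset.mem_univ i, hi⟩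
          have h1 := hεbound i hiS
          have h2 : |s * (Ax z i - Ax x i)| ≤ Ax x i - b i := by
            rw [abs_mul]
            rcases hs with h | h <;> rw [h] <;>
              simp only [abs_neg, abs_of_pos hεpos] <;> exact h1
          have := neg_abs_le (s * (Ax z i - Ax x i))
          linarith
      · intro i hi
        rw [hlin x z s i, hzpers i hi, hi]
        ring
    have h1 := hopt _ (hmove ε (Or.inl rfl))
    have h2 := hopt _ (hmove (-ε) (Or.inr rfl))
    rw [hobjlin x z ε] at h1
    rw [hobjlin x z (-ε)] at h2
    have : (∑ j, c j * z j) - ∑ j, c j * x j = 0 := by nlinarith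
    linarith
  -- main induction on the number of slack constraints
  suffices H : ∀ d : ℕ, ∀ x : κ → ℝ, x ∈ F →
      (∀ y ∈ F, ∑ j, c j * x j ≤ ∑ j, c j * y j) →
      (∀ z : κ → ℝ, (∀ i, (b i : ℝ) ≤ Ax z i) →
        (∀ i, Ax x i = (b i : ℝ) → Ax z i = (b i : ℝ)) → z ∈ F) →
      (Finset.univ.filter (fun i => Ax x i ≠ (b i : ℝ))).card ≤ d →
      ∃ y : κ → ℚ, (fun j => (y j : ℝ)) ∈ F ∧
        (∀ z ∈ F, ∑ j, c j * (y j : ℝ) ≤ ∑ j, c j * z j) ∧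
        ∑ j, ratSize (y j) ≤ keyBound (Fintype.card κ) σ by
    intro x hxF hopt hcl
    exact H _ x hxF hopt hcl le_rfl
  intro d
  induction d with
  | zero =>
    intro x hxF hopt hcl hcard
    have htight : ∀ i, Ax x i = (b i : ℝ) := by
      intro i
      by_contra hne
      have : i ∈ Finset.univ.filter (fun i => Ax x i ≠ (b i : ℝ)) := by
        rw [Finset.mem_filter]; exact ⟨Finset.mem_univ i, hne⟩
      have := Finset.card_pos.2 ⟨i, this⟩
      omega
    obtain ⟨y0, hy0sol, hy0size⟩ := key_lemma A b σ hA hb x htight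
    have hy0r : ∀ i, Ax (fun j => (y0 j : ℝ)) i = (b i : ℝ) := by
      intro i
      rw [hAx]
      simp only
      exact_mod_cast congrArg (fun q : ℚ => (q : ℝ)) (hy0sol i)
    obtain ⟨hyF, hyobj⟩ := Qmember x hxF hopt hcl _ (fun i => (hy0r i).ge) (fun i _ => hy0r i)
    exact ⟨y0, hyF, fun z hz => le_trans (le_of_eq hyobj) (hopt z hz), hy0size⟩
  | succ d ih =>
    intro x hxF hopt hcl hcard
    set T : Finset ι := Finset.univ.filter (fun i => Ax x i = (b i : ℝ)) with hT
    obtain ⟨y0, hy0sol, hy0size⟩ := key_lemma (ι := {i // i ∈ T})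
      (fun i' j => A i'.1 j) (fun i' => b i'.1) σ (fun i' j => hA i'.1 j) (fun i' => hb i'.1) x
      (fun i' => by
        have h2 : (i' : ι) ∈ Finset.univ.filter (fun i => Ax x i = (b i : ℝ)) := by
          rw [← hT]; exact i'.2
        exact (Finset.mem_filter.1 h2).2)
    have hy0tight : ∀ i, Ax x i = (b i : ℝ) → Ax (fun j => (y0 j : ℝ)) i = (b i : ℝ) := by
      intro i hi
      have hiT : i ∈ T := by rw [hT, Finset.mem_filter]; exact ⟨Finset.mem_univ i, hi⟩
      have := hy0sol ⟨i, hiT⟩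
      rw [hAx]
      simp only
      exact_mod_cast congrArg (fun q : ℚ => (q : ℝ)) this
    by_cases hfeas : ∀ i, (b i : ℝ) ≤ Ax (fun j => (y0 j : ℝ)) i
    · obtain ⟨hyF, hyobj⟩ := Qmember x hxF hopt hcl _ hfeas hy0tight
      exact ⟨y0, hyF, fun z hz => le_trans (le_of_eq hyobj) (hopt z hz), hy0size⟩
    · push_neg at hfeas
      obtain ⟨i0, hi0⟩ := hfeas
      set y0r : κ → ℝ := fun j => (y0 j : ℝ) with hy0r
      set δ : ι → ℝ := fun i => Ax y0r i - Ax x i with hδ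
      set V : Finset ι := Finset.univ.filter (fun i => δ i < 0) with hV
      have hi0V : i0 ∈ V := by
        rw [hV, Finset.mem_filter]
        refine ⟨Finset.mem_univ i0, ?_⟩
        have h4 : (b i0 : ℝ) ≤ Ax x i0 := hFfeas x hxF i0
        show Ax y0r i0 - Ax x i0 < 0
        linarith
      have hVslack : ∀ i ∈ V, 0 < Ax x i - b i := by
        intro i hi
        rw [hV, Finset.mem_filter] at hi
        have h1 : (b i : ℝ) ≤ Ax x i := hFfeas x hxF i
        rcases lt_or_eq_of_le h1 with h | h
        · linarith
        · exfalso
          have h5 : Ax y0r i = (b i : ℝ) := hy0tight i h.symm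
          have h6 : Ax y0r i - Ax x i < 0 := hi.2
          linarith
      have hVne : V.Nonempty := ⟨i0, hi0V⟩
      set ts : ℝ := V.inf' hVne (fun i => (Ax x i - b i) / (-δ i)) with hts
      have hδneg : ∀ i ∈ V, δ i < 0 := by
        intro i hi; rw [hV, Finset.mem_filter] at hi; exact hi.2
      have htspos : 0 < ts := by
        rw [hts, Finset.lt_inf'_iff]
        intro i hi
        exact div_pos (hVslack i hi) (by linarith [hδneg i hi])
      have htsle : ∀ i ∈ V, ts ≤ (Ax x i - b i) / (-δ i) := fun i hi => by
        rw [hts]; exact Finset.inf'_le _ hi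
      -- the new point
      set x' : κ → ℝ := fun j => x j + ts * (y0r j - x j) with hx'
      have hx'A : ∀ i, Ax x' i = Ax x i + ts * δ i := fun i => hlin x y0r ts i
      have hx'feas : ∀ i, (b i : ℝ) ≤ Ax x' i := by
        intro i
        rw [hx'A i]
        by_cases hi : i ∈ V
        · have h1 := htsle i hi
          have h2 := hδneg i hi
          have h3 : ts * (-δ i) ≤ Ax x i - b i := by
            rw [← div_mul_cancel₀ (Ax x i - (b i : ℝ)) (show (-δ i) ≠ 0 by linarith)]
            exact mul_le_mul_of_nonneg_right h1 (by linarith)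
          linarith
        · have h2 : 0 ≤ δ i := by
            by_contra hneg
            exact hi (by rw [hV, Finset.mem_filter]; exact ⟨Finset.mem_univ i, by linarith⟩)
          have h7 : (b i : ℝ) ≤ Ax x i := hFfeas x hxF i
          nlinarith
      have hx'pers : ∀ i, Ax x i = (b i : ℝ) → Ax x' i = (b i : ℝ) := by
        intro i hi
        have hδ0 : δ i = 0 := by
          have h7 : Ax y0r i = (b i : ℝ) := hy0tight i hi
          show Ax y0r i - Ax x i = 0
          rw [h7, hi]; ring
        rw [hx'A i, hδ0, hi]
        ring
      obtain ⟨hx'F, hx'obj⟩ := Qmember x hxF hopt hcl x' hx'feas hx'pers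
      have hx'opt : ∀ y ∈ F, ∑ j, c j * x' j ≤ ∑ j, c j * y j := by
        intro y hy
        rw [hx'obj]
        exact hopt y hy
      have hx'cl : ∀ z : κ → ℝ, (∀ i, (b i : ℝ) ≤ Ax z i) →
          (∀ i, Ax x' i = (b i : ℝ) → Ax z i = (b i : ℝ)) → z ∈ F := by
        intro z hzf hzp
        exact hcl z hzf (fun i hi => hzp i (hx'pers i hi))
      -- the minimizing index becomes tight
      obtain ⟨istar, histar, histarEq⟩ := Finset.exists_mem_eq_inf' hVne
        (fun i => (Ax x i - b i) / (-δ i))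
      have histartight : Ax x' istar = (b istar : ℝ) := by
        have h2 := hδneg istar histar
        have hne : δ istar ≠ 0 := by linarith
        rw [hx'A istar, hts, histarEq]
        have h3 : (Ax x istar - (b istar : ℝ)) * δ istar / -δ istar
            = -(Ax x istar - (b istar : ℝ)) := by
          rw [mul_div_assoc, div_neg, div_self hne, mul_neg_one]
        rw [div_mul_eq_mul_div, h3]
        ring
      have histarslack : Ax x istar ≠ (b istar : ℝ) := by
        have := hVslack istar histar
        intro h; rw [h] at this; simp at this
      have hsubset : Finset.univ.filter (fun i => Ax x' i ≠ (b i : ℝ)) ⊆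
          (Finset.univ.filter (fun i => Ax x i ≠ (b i : ℝ))).erase istar := by
        intro i hi
        rw [Finset.mem_filter] at hi
        rw [Finset.mem_erase, Finset.mem_filter]
        refine ⟨?_, Finset.mem_univ i, ?_⟩
        · intro h; subst h; exact hi.2 histartight
        · intro h; exact hi.2 (hx'pers i h)
      have hcard' : (Finset.univ.filter (fun i => Ax x' i ≠ (b i : ℝ))).card ≤ d := by
        have h1 := Finset.card_le_card hsubset
        have h2 : istar ∈ Finset.univ.filter (fun i => Ax x i ≠ (b i : ℝ)) := by
          rw [Finset.mem_filter]; exact ⟨Finset.mem_univ istar, histarslack⟩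
        have h3 := Finset.card_erase_of_mem h2
        omega
      exact ih x' hx'F hx'opt hx'cl hcard'

def sizePoly : MvPolynomial (Fin 2) ℕ :=
  (MvPolynomial.X 0) * (2 * (MvPolynomial.X 0 +
    ((MvPolynomial.X 0 + 2 * MvPolynomial.X 1 + 2 * MvPolynomial.X 1 * MvPolynomial.X 0) +
      2 * (MvPolynomial.X 0 * MvPolynomial.X 0 +
        (MvPolynomial.X 0 + 2 * MvPolynomial.X 1 + 2 * MvPolynomial.X 1 * MvPolynomial.X 0) *
          MvPolynomial.X 0 +
        (MvPolynomial.X 0 + 2 * MvPolynomial.X 1 + 2 * MvPolynomial.X 1 * MvPolynomial.X 0) *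
          (MvPolynomial.X 0 * MvPolynomial.X 0))) *
      (MvPolynomial.X 0 + 1)) + 3)

lemma sizePoly_eval (n s : ℕ) :
    MvPolynomial.eval (![n, s] : Fin 2 → ℕ) sizePoly = keyBound n s := by
  simp [sizePoly, keyBound, eB, hB, gB]

/-- there is a polynomial `f` in two variables with nonnegative integer
coefficients such that whenever the bilevel LP `(P)` (whose data entries all have size at
most `σ`) has an optimal solution, it has a rational optimal solution `(x̄1, x̄2)` with
`size(x̄1) + size(x̄2) ≤ f(n, σ)`, where `n = n1 + n2`. -/
theorem stmt1 :
    ∃ f : MvPolynomial (Fin 2) ℕ,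
      ∀ (m1 m2 n1 n2 : ℕ)
        (A11 : Matrix (Fin m1) (Fin n1) ℚ) (A12 : Matrix (Fin m1) (Fin n2) ℚ)
        (A21 : Matrix (Fin m2) (Fin n1) ℚ) (A22 : Matrix (Fin m2) (Fin n2) ℚ)
        (b1 : Fin m1 → ℚ) (b2 : Fin m2 → ℚ)
        (c11 c21 : Fin n1 → ℚ) (c22 : Fin n2 → ℚ) (σ : ℕ),
        (∀ j k, ratSize (A11 j k) ≤ σ) → (∀ j k, ratSize (A12 j k) ≤ σ) →
        (∀ j k, ratSize (A21 j k) ≤ σ) → (∀ j k, ratSize (A22 j k) ≤ σ) →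
        (∀ j, ratSize (b1 j) ≤ σ) → (∀ j, ratSize (b2 j) ≤ σ) →
        (∃ x ∈ BFeas m1 m2 n1 n2 A11 A12 A21 A22 b1 b2 c11,
          ∀ y ∈ BFeas m1 m2 n1 n2 A11 A12 A21 A22 b1 b2 c11,
            BObj n1 n2 c21 c22 x ≤ BObj n1 n2 c21 c22 y) →
        ∃ (x1 : Fin n1 → ℚ) (x2 : Fin n2 → ℚ),
          ((fun i => (x1 i : ℝ)), (fun i => (x2 i : ℝ))) ∈
            BFeas m1 m2 n1 n2 A11 A12 A21 A22 b1 b2 c11 ∧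
          (∀ y ∈ BFeas m1 m2 n1 n2 A11 A12 A21 A22 b1 b2 c11,
            BObj n1 n2 c21 c22 ((fun i => (x1 i : ℝ)), (fun i => (x2 i : ℝ))) ≤
              BObj n1 n2 c21 c22 y) ∧
          (∑ i, ratSize (x1 i)) + (∑ i, ratSize (x2 i)) ≤
            MvPolynomial.eval (![n1 + n2, σ] : Fin 2 → ℕ) f := by
  classical
  refine ⟨sizePoly, ?_⟩
  intro m1 m2 n1 n2 A11 A12 A21 A22 b1 b2 c11 c21 c22 σ hA11 hA12 hA21 hA22 hb1 hb2 hex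
  obtain ⟨x, hxF, hxopt⟩ := hex
  set AA : Matrix (Fin m1 ⊕ Fin m2) (Fin n1 ⊕ Fin n2) ℚ :=
    Sum.elim (fun i => Sum.elim (A11 i) (A12 i)) (fun i => Sum.elim (A21 i) (A22 i)) with hAA
  set bb : (Fin m1 ⊕ Fin m2) → ℚ := Sum.elim b1 b2 with hbb
  set cc : (Fin n1 ⊕ Fin n2) → ℝ :=
    Sum.elim (fun k => (c21 k : ℝ)) (fun k => (c22 k : ℝ)) with hcc
  set F : Set ((Fin n1 ⊕ Fin n2) → ℝ) :=
    {w | ((fun k => w (Sum.inl k)), (fun k => w (Sum.inr k))) ∈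
      BFeas m1 m2 n1 n2 A11 A12 A21 A22 b1 b2 c11} with hF
  have hrow1 : ∀ (w : (Fin n1 ⊕ Fin n2) → ℝ) (j : Fin m1),
      (∑ k, (AA (Sum.inl j) k : ℝ) * w k)
        = ∑ k, (A11 j k : ℝ) * w (Sum.inl k) + ∑ k, (A12 j k : ℝ) * w (Sum.inr k) := by
    intro w j
    rw [Fintype.sum_sum_type]
    rfl
  have hrow2 : ∀ (w : (Fin n1 ⊕ Fin n2) → ℝ) (j : Fin m2),
      (∑ k, (AA (Sum.inr j) k : ℝ) * w k)
        = ∑ k, (A21 j k : ℝ) * w (Sum.inl k) + ∑ k, (A22 j k : ℝ) * w (Sum.inr k) := by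
    intro w j
    rw [Fintype.sum_sum_type]
    rfl
  have hobj : ∀ (w : (Fin n1 ⊕ Fin n2) → ℝ),
      (∑ k, cc k * w k)
        = BObj n1 n2 c21 c22 ((fun k => w (Sum.inl k)), (fun k => w (Sum.inr k))) := by
    intro w
    rw [Fintype.sum_sum_type]
    rfl
  have hsize : ∀ i k, ratSize (AA i k) ≤ σ := by
    rintro (i | i) (k | k)
    exacts [hA11 i k, hA12 i k, hA21 i k, hA22 i k]
  have hbsize : ∀ i, ratSize (bb i) ≤ σ := by
    rintro (i | i)
    exacts [hb1 i, hb2 i]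
  have hFfeas : ∀ w ∈ F, ∀ i, (bb i : ℝ) ≤ ∑ k, (AA i k : ℝ) * w k := by
    intro w hw i
    have hw' : ((fun k => w (Sum.inl k)), (fun k => w (Sum.inr k))) ∈
        BFeas m1 m2 n1 n2 A11 A12 A21 A22 b1 b2 c11 := hw
    obtain ⟨h2, h1, _⟩ := hw'
    cases i with
    | inl j => rw [hrow1 w j]; exact h1 j
    | inr j => rw [hrow2 w j]; exact h2 j
  set xs : (Fin n1 ⊕ Fin n2) → ℝ := Sum.elim x.1 x.2 with hxs
  have hxsF : xs ∈ F := hxF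
  have hxsopt : ∀ w ∈ F, (∑ k, cc k * xs k) ≤ ∑ k, cc k * w k := by
    intro w hw
    rw [hobj xs, hobj w]
    exact hxopt _ hw
  have hclose : ∀ z : (Fin n1 ⊕ Fin n2) → ℝ,
      (∀ i, (bb i : ℝ) ≤ ∑ k, (AA i k : ℝ) * z k) →
      (∀ i, (∑ k, (AA i k : ℝ) * xs k) = (bb i : ℝ) →
        (∑ k, (AA i k : ℝ) * z k) = (bb i : ℝ)) →
      z ∈ F := by
    intro z hzfeas hzpers
    obtain ⟨hx2, hx1, hxlow⟩ := hxF
    refine ⟨?_, ?_, ?_⟩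
    · intro j; have := hzfeas (Sum.inr j); rwa [hrow2 z j] at this
    · intro j; have := hzfeas (Sum.inl j); rwa [hrow1 z j] at this
    · intro y hy
      by_contra hlt
      push_neg at hlt
      set z1 : Fin n1 → ℝ := fun k => z (Sum.inl k) with hz1
      set z2 : Fin n2 → ℝ := fun k => z (Sum.inr k) with hz2
      set dd : Fin n1 → ℝ := fun k => y k - z1 k with hdd
      set s : Fin m1 → ℝ := fun j =>
        ∑ k, (A11 j k : ℝ) * x.1 k + ∑ k, (A12 j k : ℝ) * x.2 k - b1 j with hs
      set δ : Fin m1 → ℝ := fun j => ∑ k, (A11 j k : ℝ) * dd k with hδ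
      have hs0 : ∀ j, 0 ≤ s j := by
        intro j
        have := hx1 j
        show (0:ℝ) ≤ ∑ k, (A11 j k : ℝ) * x.1 k + ∑ k, (A12 j k : ℝ) * x.2 k - b1 j
        linarith
      set S : Finset (Fin m1) := Finset.univ.filter (fun j => s j ≠ 0) with hS
      set ε : ℝ := if hSne : S.Nonempty
        then min 1 (S.inf' hSne (fun j => s j / (|δ j| + 1))) else 1 with hε
      have hSpos : ∀ j ∈ S, 0 < s j := by
        intro j hj
        rw [hS, Finset.mem_filter] at hj
        exact lt_of_le_of_ne (hs0 j) (Ne.symm hj.2)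
      have hεpos : 0 < ε := by
        rw [hε]
        split_ifs with hSne
        · refine lt_min one_pos ?_
          rw [Finset.lt_inf'_iff]
          intro j hj
          exact div_pos (hSpos j hj) (by positivity)
        · exact one_pos
      have hεbound : ∀ j ∈ S, ε * |δ j| ≤ s j := by
        intro j hj
        have hSne : S.Nonempty := ⟨j, hj⟩
        have h1 : ε ≤ s j / (|δ j| + 1) := by
          rw [hε]
          simp only [dif_pos hSne]
          exact le_trans (min_le_right _ _) (S.inf'_le _ hj)
        have h2 : (0:ℝ) < |δ j| + 1 := by positivity
        have h3 : ε * (|δ j| + 1) ≤ s j := by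
          rw [← div_mul_cancel₀ (s j) h2.ne']
          exact mul_le_mul_of_nonneg_right h1 h2.le
        nlinarith [abs_nonneg (δ j), hεpos]
      have hexp : ∀ j, (∑ k, (A11 j k : ℝ) * (x.1 k + ε * dd k))
          = ∑ k, (A11 j k : ℝ) * x.1 k + ε * δ j := by
        intro j
        have h1 : ∀ k, (A11 j k : ℝ) * (x.1 k + ε * dd k)
            = (A11 j k : ℝ) * x.1 k + ε * ((A11 j k : ℝ) * dd k) := fun k => by ring
        rw [Finset.sum_congr rfl (fun k _ => h1 k), Finset.sum_add_distrib]
        congr 1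
        rw [← Finset.mul_sum]
      have hfeasw : ∀ j, (b1 j : ℝ) ≤
          ∑ k, (A11 j k : ℝ) * (x.1 k + ε * dd k) + ∑ k, (A12 j k : ℝ) * x.2 k := by
        intro j
        rw [hexp j]
        by_cases hj : s j = 0
        · have hsj : ∑ k, (A11 j k : ℝ) * x.1 k + ∑ k, (A12 j k : ℝ) * x.2 k = (b1 j : ℝ) := by
            have : s j = 0 := hj
            rw [hs] at this
            simp only at this
            linarith
          have htight : (∑ k, (AA (Sum.inl j) k : ℝ) * xs k) = (bb (Sum.inl j) : ℝ) := by
            rw [hrow1 xs j]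
            exact hsj
          have hzt := hzpers _ htight
          rw [hrow1 z j] at hzt
          have hyj := hy j
          have hδj : 0 ≤ δ j := by
            have h4 : ∑ k, (A11 j k : ℝ) * dd k
                = (∑ k, (A11 j k : ℝ) * y k) - ∑ k, (A11 j k : ℝ) * z1 k := by
              rw [← Finset.sum_sub_distrib]
              refine Finset.sum_congr rfl (fun k _ => ?_)
              show (A11 j k : ℝ) * (y k - z1 k) = _
              ring
            show (0:ℝ) ≤ ∑ k, (A11 j k : ℝ) * dd k
            rw [h4]
            have hbz : (bb (Sum.inl j) : ℝ) = (b1 j : ℝ) := rfl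
            linarith [hzt, hyj]
          have hsj' : (0:ℝ) = s j := hj.symm
          have : s j = ∑ k, (A11 j k : ℝ) * x.1 k + ∑ k, (A12 j k : ℝ) * x.2 k - b1 j := rfl
          nlinarith [hεpos]
        · have hjS : j ∈ S := by
            rw [hS, Finset.mem_filter]; exact ⟨Finset.mem_univ j, hj⟩
          have h5 := hεbound j hjS
          have h6 : s j = ∑ k, (A11 j k : ℝ) * x.1 k + ∑ k, (A12 j k : ℝ) * x.2 k - b1 j := rfl
          have h7 : ε * δ j ≥ -(ε * |δ j|) := by
            have := neg_abs_le (δ j)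
            nlinarith [hεpos]
          linarith
      have hlow := hxlow (fun k => x.1 k + ε * dd k) hfeasw
      have hexp2 : (∑ k, (c11 k : ℝ) * (x.1 k + ε * dd k))
          = ∑ k, (c11 k : ℝ) * x.1 k
            + ε * ((∑ k, (c11 k : ℝ) * y k) - ∑ k, (c11 k : ℝ) * z1 k) := by
        have h1 : ∀ k, (c11 k : ℝ) * (x.1 k + ε * dd k)
            = (c11 k : ℝ) * x.1 k + ε * ((c11 k : ℝ) * y k - (c11 k : ℝ) * z1 k) := by
          intro k
          show (c11 k : ℝ) * (x.1 k + ε * (y k - z1 k)) = _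
          ring
        rw [Finset.sum_congr rfl (fun k _ => h1 k), Finset.sum_add_distrib]
        congr 1
        rw [← Finset.mul_sum, Finset.sum_sub_distrib]
      rw [hexp2] at hlow
      have hltz : (∑ k, (c11 k : ℝ) * y k) - ∑ k, (c11 k : ℝ) * z1 k < 0 := by
        have := hlt
        show _ < (0:ℝ)
        have hz1e : ∀ k, z1 k = z (Sum.inl k) := fun k => rfl
        linarith [hlt]
      nlinarith [hεpos, hltz, hlow]
  obtain ⟨y, hyF, hyopt, hysize⟩ :=
    purify AA bb σ hsize hbsize F cc hFfeas xs hxsF hxsopt hclose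
  refine ⟨fun k => y (Sum.inl k), fun k => y (Sum.inr k), hyF, ?_, ?_⟩
  · intro w hw
    have h1 := hyopt (Sum.elim w.1 w.2) (show Sum.elim w.1 w.2 ∈ F from hw)
    rw [hobj (fun j => (y j : ℝ)), hobj (Sum.elim w.1 w.2)] at h1
    exact h1
  · rw [sizePoly_eval]
    have hcards : Fintype.card (Fin n1 ⊕ Fin n2) = n1 + n2 := by simp
    calc (∑ i, ratSize (y (Sum.inl i))) + ∑ i, ratSize (y (Sum.inr i))
        = ∑ k : Fin n1 ⊕ Fin n2, ratSize (y k) := (Fintype.sum_sum_type (fun k : Fin n1 ⊕ Fin n2 => ratSize (y k))).symm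
      _ ≤ keyBound (Fintype.card (Fin n1 ⊕ Fin n2)) σ := hysize
      _ = keyBound (n1 + n2) σ := by rw [hcards]
end
end

section
/- Under the assumptions in the context, there exists M0 > 0 such that for every real M ≥ M0, v(Q) = v(Q'(M)). -/
open Classical


noncomputable section

/-- The lower-level feasible set of `(Q)` given `x2`. -/
def QLL (m1 n1 n2 : ℕ) (A11 : Matrix (Fin m1) (Fin n1) ℚ)
    (A12 : Matrix (Fin m1) (Fin n2) ℚ) (b1 : Fin m1 → ℚ) (x2 : Fin n2 → ℝ) :
    Set (Fin n1 → ℝ) :=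
  {x1 | ∀ j, (b1 j : ℝ) ≤ ∑ k, (A11 j k : ℝ) * x1 k + ∑ k, (A12 j k : ℝ) * x2 k}

/-- The (bilevel) feasible set of `(Q)`. -/
def FQ (m1 m2 m2' n1 n2 : ℕ)
    (A11 : Matrix (Fin m1) (Fin n1) ℚ) (A12 : Matrix (Fin m1) (Fin n2) ℚ)
    (A21 : Matrix (Fin m2) (Fin n1) ℚ) (A22 : Matrix (Fin m2) (Fin n2) ℚ)
    (Ab21 : Matrix (Fin m2') (Fin n1) ℚ) (Ab22 : Matrix (Fin m2') (Fin n2) ℚ)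
    (b1 : Fin m1 → ℚ) (b2 : Fin m2 → ℚ) (bb2 : Fin m2' → ℚ) (c11 : Fin n1 → ℚ) :
    Set ((Fin n1 → ℝ) × (Fin n2 → ℝ)) :=
  {x | (∀ j, (b2 j : ℝ) ≤ ∑ k, (A21 j k : ℝ) * x.1 k + ∑ k, (A22 j k : ℝ) * x.2 k) ∧
       (∀ j, (bb2 j : ℝ) ≤ ∑ k, (Ab21 j k : ℝ) * x.1 k + ∑ k, (Ab22 j k : ℝ) * x.2 k) ∧
       x.1 ∈ QLL m1 n1 n2 A11 A12 b1 x.2 ∧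
       ∀ y ∈ QLL m1 n1 n2 A11 A12 b1 x.2,
         ∑ k, (c11 k : ℝ) * x.1 k ≤ ∑ k, (c11 k : ℝ) * y k}

/-- The objective of `(Q)`. -/
def objQ (n1 n2 : ℕ) (c21 : Fin n1 → ℚ) (c22 : Fin n2 → ℚ)
    (x : (Fin n1 → ℝ) × (Fin n2 → ℝ)) : ℝ :=
  ∑ k, (c21 k : ℝ) * x.1 k + ∑ k, (c22 k : ℝ) * x.2 k

/-- The lower-level feasible set of `(Q'(M))` given `x2`: pairs `(x1', e')` with
`0 ≤ e' ≤ ē` (where `ē = 1` or `ē = +∞`). -/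
def QLL' (m1 m2' n1 n2 : ℕ) (A11 : Matrix (Fin m1) (Fin n1) ℚ)
    (A12 : Matrix (Fin m1) (Fin n2) ℚ)
    (Ab21 : Matrix (Fin m2') (Fin n1) ℚ) (Ab22 : Matrix (Fin m2') (Fin n2) ℚ)
    (b1 : Fin m1 → ℚ) (bb2 : Fin m2' → ℚ) (ebar : WithTop ℝ) (x2 : Fin n2 → ℝ) :
    Set ((Fin n1 → ℝ) × ℝ) :=
  {w | (∀ j, (b1 j : ℝ) ≤ ∑ k, (A11 j k : ℝ) * w.1 k + ∑ k, (A12 j k : ℝ) * x2 k) ∧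
       (∀ j, (bb2 j : ℝ) ≤
         ∑ k, (Ab21 j k : ℝ) * w.1 k + ∑ k, (Ab22 j k : ℝ) * x2 k + w.2) ∧
       0 ≤ w.2 ∧ (w.2 : WithTop ℝ) ≤ ebar}

/-- The (bilevel) feasible set of `(Q'(M))` (independent of `M`). -/
def FQ' (m1 m2 m2' n1 n2 : ℕ)
    (A11 : Matrix (Fin m1) (Fin n1) ℚ) (A12 : Matrix (Fin m1) (Fin n2) ℚ)
    (A21 : Matrix (Fin m2) (Fin n1) ℚ) (A22 : Matrix (Fin m2) (Fin n2) ℚ)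
    (Ab21 : Matrix (Fin m2') (Fin n1) ℚ) (Ab22 : Matrix (Fin m2') (Fin n2) ℚ)
    (b1 : Fin m1 → ℚ) (b2 : Fin m2 → ℚ) (bb2 : Fin m2' → ℚ) (c11 : Fin n1 → ℚ)
    (ebar : WithTop ℝ) :
    Set ((Fin n1 → ℝ) × (Fin n2 → ℝ) × ℝ) :=
  {x | (∀ j, (b2 j : ℝ) ≤ ∑ k, (A21 j k : ℝ) * x.1 k + ∑ k, (A22 j k : ℝ) * x.2.1 k) ∧
       (x.1, x.2.2) ∈ QLL' m1 m2' n1 n2 A11 A12 Ab21 Ab22 b1 bb2 ebar x.2.1 ∧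
       ∀ w ∈ QLL' m1 m2' n1 n2 A11 A12 Ab21 Ab22 b1 bb2 ebar x.2.1,
         ∑ k, (c11 k : ℝ) * x.1 k ≤ ∑ k, (c11 k : ℝ) * w.1 k}

/-- The objective of `(Q'(M))`. -/
def objQ' (n1 n2 : ℕ) (c21 : Fin n1 → ℚ) (c22 : Fin n2 → ℚ) (M : ℝ)
    (x : (Fin n1 → ℝ) × (Fin n2 → ℝ) × ℝ) : ℝ :=
  ∑ k, (c21 k : ℝ) * x.1 k + ∑ k, (c22 k : ℝ) * x.2.1 k + M * x.2.2

def rowLin {n : ℕ} (w : Fin n → ℚ) : (Fin n → ℝ) →ₗ[ℝ] ℝ where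
  toFun x := ∑ k, (w k : ℝ) * x k
  map_add' x y := by
    rw [← Finset.sum_add_distrib]
    apply Finset.sum_congr rfl
    intros; simp [Pi.add_apply, mul_add]
  map_smul' c x := by
    simp only [RingHom.id_apply, smul_eq_mul, Finset.mul_sum]
    apply Finset.sum_congr rfl
    intros; simp [Pi.smul_apply, smul_eq_mul]; ring

@[simp] lemma rowLin_apply {n : ℕ} (w : Fin n → ℚ) (x : Fin n → ℝ) :
    rowLin w x = ∑ k, (w k : ℝ) * x k := rfl

lemma rowSum_combo {n : ℕ} (w : Fin n → ℚ) (u v : Fin n → ℝ) (l : ℝ) :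
    ∑ k, (w k : ℝ) * ((1 - l) * u k + l * v k)
      = (1 - l) * (∑ k, (w k : ℝ) * u k) + l * (∑ k, (w k : ℝ) * v k) := by
  rw [Finset.mul_sum, Finset.mul_sum, ← Finset.sum_add_distrib]
  apply Finset.sum_congr rfl
  intros; ring

lemma sInf_image_eq_of_min {α : Type} (S : Set α) (f : α → ℝ) (x : α) (hx : x ∈ S)
    (hopt : ∀ y ∈ S, f x ≤ f y) : sInf (f '' S) = f x := by
  apply le_antisymm
  · exact csInf_le ⟨f x, by rintro _ ⟨y, hy, rfl⟩; exact hopt y hy⟩ ⟨x, hx, rfl⟩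
  · exact le_csInf ⟨f x, x, hx, rfl⟩ (by rintro _ ⟨y, hy, rfl⟩; exact hopt y hy)

/-- A set is polyhedral if it is a finite intersection of closed halfspaces. -/
def IsPolyh {V : Type} [AddCommGroup V] [Module ℝ V] (S : Set V) : Prop :=
  ∃ (ι : Type) (_ : Fintype ι) (f : ι → V →ₗ[ℝ] ℝ) (r : ι → ℝ),
    S = {x | ∀ i, r i ≤ f i x}

lemma IsPolyh.preimage {V W : Type} [AddCommGroup V] [Module ℝ V]
    [AddCommGroup W] [Module ℝ W] {S : Set V} (h : IsPolyh S) (L : W →ₗ[ℝ] V) :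
    IsPolyh (L ⁻¹' S) := by
  obtain ⟨ι, inst, f, r, rfl⟩ := h
  exact ⟨ι, inst, fun i => (f i).comp L, r, rfl⟩

lemma IsPolyh.image_equiv {V W : Type} [AddCommGroup V] [Module ℝ V]
    [AddCommGroup W] [Module ℝ W] {S : Set V} (h : IsPolyh S) (e : V ≃ₗ[ℝ] W) :
    IsPolyh (e '' S) := by
  have : (e '' S) = (e.symm : W →ₗ[ℝ] V) ⁻¹' S := by
    ext w
    simp [Set.mem_image, Set.mem_preimage]
    constructor
    · rintro ⟨v, hv, rfl⟩; simpa using hv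
    · intro hv; exact ⟨e.symm w, hv, by simp⟩
  rw [this]; exact h.preimage _

/-- Fourier–Motzkin core step: projection of a polyhedron in `V × ℝ` to `V`. -/
lemma IsPolyh.fst_image_real {V : Type} [AddCommGroup V] [Module ℝ V]
    {S : Set (V × ℝ)} (h : IsPolyh S) : IsPolyh (Prod.fst '' S) := by
  obtain ⟨ι, inst, f, r, rfl⟩ := h
  set g : ι → V →ₗ[ℝ] ℝ := fun i => (f i).comp (LinearMap.inl ℝ V ℝ) with hg
  set α : ι → ℝ := fun i => f i (0, 1) with hα
  have hdec : ∀ i (v : V) (t : ℝ), f i (v, t) = g i v + t * α i := by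
    intro i v t
    have : (v, t) = (v, (0:ℝ)) + t • ((0:V), (1:ℝ)) := by
      simp [Prod.ext_iff]
    rw [this, map_add, map_smul]
    simp [hg, hα, smul_eq_mul, LinearMap.inl_apply]
  classical
  refine ⟨{i : ι // α i = 0} ⊕ ({i : ι // 0 < α i} × {i : ι // α i < 0}),
    inferInstance,
    Sum.elim (fun i => g i.1)
      (fun p => α p.1.1 • g p.2.1 - α p.2.1 • g p.1.1),
    Sum.elim (fun i => r i.1) (fun p => α p.1.1 * r p.2.1 - α p.2.1 * r p.1.1), ?_⟩
  ext v
  simp only [Set.mem_image, Set.mem_setOf_eq, Sum.forall, Sum.elim_inl, Sum.elim_inr]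
  constructor
  · rintro ⟨⟨v', t⟩, hv', rfl⟩
    constructor
    · rintro ⟨i, hi⟩
      have := hv' i
      rw [hdec i v' t] at this
      simpa [hi] using this
    · rintro ⟨⟨i, hi⟩, ⟨j, hj⟩⟩
      have h1 := hv' i
      have h2 := hv' j
      rw [hdec i v' t] at h1
      rw [hdec j v' t] at h2
      simp only [LinearMap.sub_apply, LinearMap.smul_apply, smul_eq_mul]
      nlinarith [mul_le_mul_of_nonneg_left h2 (le_of_lt hi),
        mul_le_mul_of_nonpos_left h1 (le_of_lt hj)]
  · rintro ⟨h0, hpm⟩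
    -- construct t
    classical
    set Ip : Finset ι := Finset.univ.filter (fun i => 0 < α i) with hIp
    set Im : Finset ι := Finset.univ.filter (fun i => α i < 0) with hIm
    set lb : ι → ℝ := fun i => (r i - g i v) / α i with hlb
    by_cases hpne : Ip.Nonempty
    · set t : ℝ := Ip.sup' hpne lb with htdef
      refine ⟨(v, t), ?_, rfl⟩
      intro i
      rw [hdec i v t]
      rcases lt_trichotomy (α i) 0 with hneg | hzero | hpos
      · -- upper bound rows
        obtain ⟨i0, hi0mem, hi0⟩ := Finset.exists_mem_eq_sup' hpne lb
        have hi0pos : 0 < α i0 := by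
          have := Finset.mem_filter.mp hi0mem; exact this.2
        have hpair := hpm ⟨⟨i0, hi0pos⟩, ⟨i, hneg⟩⟩
        simp only [LinearMap.sub_apply, LinearMap.smul_apply, smul_eq_mul] at hpair
        -- hpair : α i0 * r i - α i * r i0 ≤ α i0 * g i v - α i * g i0 v
        have hlb0 : α i0 * lb i0 = r i0 - g i0 v := by
          simp only [hlb]; rw [mul_comm, div_mul_cancel₀ _ (ne_of_gt hi0pos)]
        have ht : t = lb i0 := hi0
        rw [ht]
        nlinarith [hpair, hlb0]
      · simpa [hzero] using h0 ⟨i, hzero⟩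
      · have : lb i ≤ t := Finset.le_sup' lb (by simp [hIp, hpos])
        have hlbi : α i * lb i = r i - g i v := by
          simp only [hlb]; rw [mul_comm, div_mul_cancel₀ _ (ne_of_gt hpos)]
        nlinarith [mul_le_mul_of_nonneg_left this (le_of_lt hpos)]
    · -- no lower bounds
      by_cases hmne : Im.Nonempty
      · set t : ℝ := Im.inf' hmne lb with htdef
        refine ⟨(v, t), ?_, rfl⟩
        intro i
        rw [hdec i v t]
        rcases lt_trichotomy (α i) 0 with hneg | hzero | hpos
        · have : t ≤ lb i := Finset.inf'_le lb (by simp [hIm, hneg])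
          have hlbi : α i * lb i = r i - g i v := by
            simp only [hlb]; rw [mul_comm, div_mul_cancel₀ _ (ne_of_lt hneg)]
          nlinarith [mul_le_mul_of_nonpos_left this (le_of_lt hneg)]
        · simpa [hzero] using h0 ⟨i, hzero⟩
        · exact absurd (Finset.filter_nonempty_iff.mpr ⟨i, Finset.mem_univ i, hpos⟩ : Ip.Nonempty) hpne
      · refine ⟨(v, 0), ?_, rfl⟩
        intro i
        rw [hdec i v 0]
        rcases lt_trichotomy (α i) 0 with hneg | hzero | hpos
        · exact absurd (Finset.filter_nonempty_iff.mpr ⟨i, Finset.mem_univ i, hneg⟩ : Im.Nonempty) hmne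
        · simpa [hzero] using h0 ⟨i, hzero⟩
        · exact absurd (Finset.filter_nonempty_iff.mpr ⟨i, Finset.mem_univ i, hpos⟩ : Ip.Nonempty) hpne

/-- `(Fin (n+1) → ℝ)` splits off its last coordinate, linearly. -/
def finSnocEquiv (n : ℕ) : (Fin (n + 1) → ℝ) ≃ₗ[ℝ] (Fin n → ℝ) × ℝ where
  toFun y := (Fin.init y, y (Fin.last n))
  invFun z := Fin.snoc z.1 z.2
  map_add' y z := by
    ext <;> simp [Fin.init]
  map_smul' c y := by
    ext <;> simp [Fin.init]
  left_inv y := by simp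
  right_inv z := by simp

def myFinZeroEquiv (V : Type) [AddCommGroup V] [Module ℝ V] :
    (V × (Fin 0 → ℝ)) ≃ₗ[ℝ] V where
  toFun := Prod.fst
  invFun v := (v, 0)
  map_add' a b := rfl
  map_smul' c a := rfl
  left_inv a := by
    ext i
    · rfl
    · exact i.elim0
  right_inv v := rfl

@[simp] lemma myFinZeroEquiv_apply (V : Type) [AddCommGroup V] [Module ℝ V]
    (a : V × (Fin 0 → ℝ)) : myFinZeroEquiv V a = a.1 := rfl

def myFinStepEquiv (V : Type) [AddCommGroup V] [Module ℝ V] (n : ℕ) :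
    (V × (Fin (n + 1) → ℝ)) ≃ₗ[ℝ] ((V × (Fin n → ℝ)) × ℝ) :=
  LinearEquiv.prodCongr (LinearEquiv.refl ℝ V) (finSnocEquiv n) ≪≫ₗ
    (LinearEquiv.prodAssoc ℝ V (Fin n → ℝ) ℝ).symm

@[simp] lemma myFinStepEquiv_apply (V : Type) [AddCommGroup V] [Module ℝ V] (n : ℕ)
    (a : V × (Fin (n + 1) → ℝ)) :
    myFinStepEquiv V n a = ((a.1, Fin.init a.2), a.2 (Fin.last n)) := rfl

lemma IsPolyh.fst_image_pi {V : Type} [AddCommGroup V] [Module ℝ V] (n : ℕ)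
    {S : Set (V × (Fin n → ℝ))} (h : IsPolyh S) : IsPolyh (Prod.fst '' S) := by
  induction n with
  | zero =>
    have heq : Prod.fst '' S = myFinZeroEquiv V '' S := by
      ext v
      constructor
      · rintro ⟨a, ha, rfl⟩; exact ⟨a, ha, by simp⟩
      · rintro ⟨a, ha, rfl⟩; exact ⟨a, ha, by simp⟩
    rw [heq]
    exact h.image_equiv _
  | succ n ih =>
    have h1 : IsPolyh (myFinStepEquiv V n '' S) := h.image_equiv _
    have h2 : IsPolyh (Prod.fst '' (myFinStepEquiv V n '' S)) := h1.fst_image_real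
    have h3 : IsPolyh (Prod.fst '' (Prod.fst '' (myFinStepEquiv V n '' S))) := ih h2
    have heq : Prod.fst '' (Prod.fst '' (myFinStepEquiv V n '' S)) = Prod.fst '' S := by
      rw [Set.image_image, Set.image_image]
      apply Set.image_congr
      intro a _
      simp
    rwa [heq] at h3

/-- Endgame lemma: for a 2-D polyhedron `D` contained in `{t ≥ 0}` on which `a + M₀t`
is bounded below for some `M₀`, there is a fixed point of `D` that minimizes
`a + M t` over `D` simultaneously for all large `M`. -/
lemma twoDim_min (ι : Type) [Fintype ι] (p q r : ι → ℝ)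
    (D : Set (ℝ × ℝ)) (hD : D = {x | ∀ i, r i ≤ p i * x.1 + q i * x.2})
    (hne : D.Nonempty) (ht0 : ∀ x ∈ D, 0 ≤ x.2)
    (hbd : ∃ M0 b : ℝ, ∀ x ∈ D, b ≤ x.1 + M0 * x.2) :
    ∃ x0 ∈ D, ∃ Ms : ℝ, ∀ M ≥ Ms, ∀ x ∈ D, x0.1 + M * x0.2 ≤ x.1 + M * x.2 := by
  classical
  obtain ⟨xb, hxb⟩ := hne
  obtain ⟨M0, b, hb⟩ := hbd
  set Ip : Finset ι := Finset.univ.filter (fun i => 0 < p i) with hIp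
  have hpne : Ip.Nonempty := by
    by_contra hco
    -- all p i ≤ 0 : then a can go to -∞ keeping membership, contradicting hbd
    have hple : ∀ i, p i ≤ 0 := by
      intro i
      by_contra hpi
      exact hco ⟨i, by simp [hIp, lt_of_not_ge hpi]⟩
    set a : ℝ := min xb.1 (b - 1 - M0 * xb.2) with ha
    have hmem : (a, xb.2) ∈ D := by
      rw [hD]
      intro i
      have hx : ∀ i, r i ≤ p i * xb.1 + q i * xb.2 := by rw [hD] at hxb; exact hxb
      have hrow := hx i
      have : p i * a ≥ p i * xb.1 :=
        mul_le_mul_of_nonpos_left (min_le_left _ _) (hple i)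
      simp only at hrow ⊢
      linarith
    have := hb _ hmem
    simp only at this
    have : b ≤ a + M0 * xb.2 := this
    have : a ≤ b - 1 - M0 * xb.2 := min_le_right _ _
    linarith
  -- t-lower-bound system: index ιT, coefficient β, rhs δ
  set ιT : Type := ι ⊕ (ι × ι) with hιT
  set β : ιT → ℝ := Sum.elim (fun i => if p i = 0 then q i else 0)
      (fun ij => if 0 < p ij.1 ∧ p ij.2 < 0 then p ij.1 * q ij.2 - p ij.2 * q ij.1 else 0)
    with hβ
  set δ : ιT → ℝ := Sum.elim (fun i => if p i = 0 then r i else 0)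
      (fun ij => if 0 < p ij.1 ∧ p ij.2 < 0 then p ij.1 * r ij.2 - p ij.2 * r ij.1 else 0)
    with hδ
  have hF1 : ∀ x ∈ D, ∀ z, δ z ≤ β z * x.2 := by
    intro x hx z
    have hxrow : ∀ i, r i ≤ p i * x.1 + q i * x.2 := by
      rw [hD] at hx; exact hx
    rcases z with i | ⟨i, j⟩
    · by_cases hpi : p i = 0
      · have := hxrow i
        simp only [hβ, hδ, Sum.elim_inl, if_pos hpi]
        rw [hpi] at this
        linarith
      · simp [hβ, hδ, Sum.elim_inl, if_neg hpi]
    · by_cases hparity : 0 < p i ∧ p j < 0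
      · obtain ⟨hpi, hpj⟩ := hparity
        have h1 := hxrow i
        have h2 := hxrow j
        simp only [hβ, hδ, Sum.elim_inr, if_pos (And.intro hpi hpj)]
        nlinarith [mul_le_mul_of_nonneg_left h2 (le_of_lt hpi),
          mul_le_mul_of_nonpos_left h1 (le_of_lt hpj)]
      · simp [hβ, hδ, Sum.elim_inr, if_neg hparity]
  set Zp : Finset ιT := Finset.univ.filter (fun z => 0 < β z) with hZp
  set tmin : ℝ := if hz : Zp.Nonempty then max 0 (Zp.sup' hz (fun z => δ z / β z)) else 0
    with htmin
  have htmin0 : 0 ≤ tmin := by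
    rw [htmin]; split <;> simp
  have hF2 : ∀ x ∈ D, tmin ≤ x.2 := by
    intro x hx
    rw [htmin]
    split
    · rename_i hz
      refine max_le (ht0 x hx) (Finset.sup'_le hz _ ?_)
      intro z hzmem
      have hβz : 0 < β z := (Finset.mem_filter.mp hzmem).2
      rw [div_le_iff₀ hβz]
      have := hF1 x hx z
      linarith [this]
    · exact ht0 x hx
  have hF3 : ∀ z, δ z ≤ β z * tmin := by
    intro z
    rcases lt_trichotomy (β z) 0 with hneg | hzero | hpos
    · have h1 : tmin ≤ xb.2 := hF2 xb hxb
      have h2 : δ z ≤ β z * xb.2 := hF1 xb hxb z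
      nlinarith
    · have h := hF1 xb hxb z
      rw [hzero, zero_mul] at h
      rw [hzero, zero_mul]
      exact h
    · have hz : Zp.Nonempty := ⟨z, by simp [hZp, hpos]⟩
      have hle : δ z / β z ≤ Zp.sup' hz (fun z => δ z / β z) :=
        Finset.le_sup' (fun z => δ z / β z) (by simp [hZp, hpos])
      have h2 : δ z / β z ≤ tmin := by
        rw [htmin, dif_pos hz]
        exact le_trans hle (le_max_right _ _)
      rw [div_le_iff₀ hpos] at h2
      linarith [h2]
  set lb : ι → ℝ := fun i => (r i - q i * tmin) / p i with hlb
  set a0 : ℝ := Ip.sup' hpne lb with ha0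
  obtain ⟨istar, histar, hista⟩ := Finset.exists_mem_eq_sup' hpne lb
  have histp : 0 < p istar := (Finset.mem_filter.mp histar).2
  have ha0i : p istar * a0 = r istar - q istar * tmin := by
    rw [ha0, hista, hlb]
    simp only
    rw [mul_comm, div_mul_cancel₀ _ (ne_of_gt histp)]
  have hmem0 : (a0, tmin) ∈ D := by
    rw [hD]
    intro i
    simp only
    rcases lt_trichotomy (p i) 0 with hneg | hzero | hpos
    · -- use cross constraint (istar, i)
      have := hF3 (Sum.inr (istar, i))
      simp only [hβ, hδ, Sum.elim_inr, if_pos (And.intro histp hneg)] at this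
      -- p istar * r i - p i * r istar ≤ (p istar * q i - p i * q istar) * tmin
      nlinarith [ha0i]
    · have := hF3 (Sum.inl i)
      simp only [hβ, hδ, Sum.elim_inl, if_pos hzero] at this
      rw [hzero]
      linarith
    · have hlbi : lb i ≤ a0 := ha0 ▸ Finset.le_sup' lb (by simp [hIp, hpos])
      have : p i * lb i = r i - q i * tmin := by
        rw [hlb]; simp only
        rw [mul_comm, div_mul_cancel₀ _ (ne_of_gt hpos)]
      nlinarith [mul_le_mul_of_nonneg_left hlbi (le_of_lt hpos)]
  refine ⟨(a0, tmin), hmem0, Ip.sup' hpne (fun i => q i / p i), ?_⟩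
  intro M hM x hx
  have hxrow := by rw [hD] at hx; exact hx istar
  have hxlb : r istar - q istar * x.2 ≤ p istar * x.1 := by
    linarith
  have hMi : q istar / p istar ≤ M :=
    le_trans (Finset.le_sup' (fun i => q i / p i) histar) hM
  have hMp : q istar ≤ M * p istar := by
    rw [div_le_iff₀ histp] at hMi
    linarith
  have hx2 : tmin ≤ x.2 := hF2 x hx
  simp only
  -- goal : a0 + M * tmin ≤ x.1 + M * x.2
  nlinarith [mul_le_mul_of_nonneg_right hMp (sub_nonneg.mpr hx2),
    mul_le_mul_of_nonneg_left hxlb (le_of_lt histp), ha0i,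
    mul_le_mul_of_nonneg_left hxlb (le_refl (0:ℝ))]

/-- `twoDim_min` packaged with an `IsPolyh` hypothesis. -/
lemma twoDim_min' (D : Set (ℝ × ℝ)) (hpoly : IsPolyh D)
    (hne : D.Nonempty) (ht0 : ∀ x ∈ D, 0 ≤ x.2)
    (hbd : ∃ M0 b : ℝ, ∀ x ∈ D, b ≤ x.1 + M0 * x.2) :
    ∃ x0 ∈ D, ∃ Ms : ℝ, ∀ M ≥ Ms, ∀ x ∈ D, x0.1 + M * x0.2 ≤ x.1 + M * x.2 := by
  obtain ⟨ι, inst, f, r, hD⟩ := hpoly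
  haveI := inst
  refine twoDim_min ι (fun i => f i (1, 0)) (fun i => f i (0, 1)) r D ?_ hne ht0 hbd
  rw [hD]
  ext x
  simp only [Set.mem_setOf_eq]
  apply forall_congr'
  intro i
  have : (x : ℝ × ℝ) = x.1 • ((1:ℝ), (0:ℝ)) + x.2 • ((0:ℝ), (1:ℝ)) := by
    simp [Prod.ext_iff]
  constructor
  · intro h
    rw [this] at h
    rw [map_add, map_smul, map_smul, smul_eq_mul, smul_eq_mul] at h
    linarith
  · intro h
    rw [this, map_add, map_smul, map_smul, smul_eq_mul, smul_eq_mul]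
    linarith

lemma isPolyh_rows {V : Type} [AddCommGroup V] [Module ℝ V] (ι : Type) [Fintype ι]
    (f : ι → V →ₗ[ℝ] ℝ) (r : ι → ℝ) : IsPolyh {x | ∀ i, r i ≤ f i x} :=
  ⟨ι, inferInstance, f, r, rfl⟩

lemma isPolyh_halfspace {V : Type} [AddCommGroup V] [Module ℝ V]
    (f : V →ₗ[ℝ] ℝ) (c : ℝ) : IsPolyh {x | c ≤ f x} :=
  ⟨Unit, inferInstance, fun _ => f, fun _ => c, by ext x; simp⟩

lemma IsPolyh.inter {V : Type} [AddCommGroup V] [Module ℝ V] {S T : Set V}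
    (hS : IsPolyh S) (hT : IsPolyh T) : IsPolyh (S ∩ T) := by
  obtain ⟨ι, i1, f, r, rfl⟩ := hS
  obtain ⟨ι', i2, g, s, rfl⟩ := hT
  haveI := i1; haveI := i2
  refine ⟨ι ⊕ ι', inferInstance, Sum.elim f g, Sum.elim r s, ?_⟩
  ext x
  simp only [Set.mem_inter_iff, Set.mem_setOf_eq, Sum.forall, Sum.elim_inl, Sum.elim_inr]

set_option maxHeartbeats 2000000 in
/-- assuming `(Q)` has an optimal solution and `(Q'(M))` has an optimal
solution for every `M > 0`, there is `M0 > 0` such that `v(Q) = v(Q'(M))` for every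
`M ≥ M0`. -/
theorem stmt2 (m1 m2 m2' n1 n2 : ℕ)
    (A11 : Matrix (Fin m1) (Fin n1) ℚ) (A12 : Matrix (Fin m1) (Fin n2) ℚ)
    (A21 : Matrix (Fin m2) (Fin n1) ℚ) (A22 : Matrix (Fin m2) (Fin n2) ℚ)
    (Ab21 : Matrix (Fin m2') (Fin n1) ℚ) (Ab22 : Matrix (Fin m2') (Fin n2) ℚ)
    (b1 : Fin m1 → ℚ) (b2 : Fin m2 → ℚ) (bb2 : Fin m2' → ℚ)
    (c11 c21 : Fin n1 → ℚ) (c22 : Fin n2 → ℚ)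
    (ebar : WithTop ℝ) (hebar : ebar = 1 ∨ ebar = ⊤)
    (hQ : ∃ x ∈ FQ m1 m2 m2' n1 n2 A11 A12 A21 A22 Ab21 Ab22 b1 b2 bb2 c11,
      ∀ y ∈ FQ m1 m2 m2' n1 n2 A11 A12 A21 A22 Ab21 Ab22 b1 b2 bb2 c11,
        objQ n1 n2 c21 c22 x ≤ objQ n1 n2 c21 c22 y)
    (hQ' : ∀ M : ℝ, 0 < M →
      ∃ x ∈ FQ' m1 m2 m2' n1 n2 A11 A12 A21 A22 Ab21 Ab22 b1 b2 bb2 c11 ebar,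
        ∀ y ∈ FQ' m1 m2 m2' n1 n2 A11 A12 A21 A22 Ab21 Ab22 b1 b2 bb2 c11 ebar,
          objQ' n1 n2 c21 c22 M x ≤ objQ' n1 n2 c21 c22 M y) :
    ∃ M0 : ℝ, 0 < M0 ∧ ∀ M : ℝ, M0 ≤ M →
      sInf (objQ n1 n2 c21 c22 ''
          FQ m1 m2 m2' n1 n2 A11 A12 A21 A22 Ab21 Ab22 b1 b2 bb2 c11) =
      sInf (objQ' n1 n2 c21 c22 M ''
          FQ' m1 m2 m2' n1 n2 A11 A12 A21 A22 Ab21 Ab22 b1 b2 bb2 c11 ebar) := by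
  classical
  obtain ⟨xQ, hxQF, hxQopt⟩ := hQ
  choose! y hyF hyO using hQ'
  set Fs := FQ m1 m2 m2' n1 n2 A11 A12 A21 A22 Ab21 Ab22 b1 b2 bb2 c11 with hFsdef
  set Fs' := FQ' m1 m2 m2' n1 n2 A11 A12 A21 A22 Ab21 Ab22 b1 b2 bb2 c11 ebar with hFs'def
  set V : ℝ := objQ n1 n2 c21 c22 xQ with hVdef
  set v : ℝ → ℝ := fun M => objQ' n1 n2 c21 c22 M (y M) with hvdef
  -- 0 ≤ ebar
  have h0ebar : ((0:ℝ) : WithTop ℝ) ≤ ebar := by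
    rcases hebar with h | h
    · rw [h]; exact_mod_cast (zero_le_one : (0:ℝ) ≤ 1)
    · rw [h]; exact le_top
  -- Step 1 : embedding FQ into FQ'
  have hembed : ∀ x ∈ Fs, (x.1, (x.2, (0:ℝ))) ∈ Fs' := by
    rintro ⟨x1, x2⟩ ⟨hb2, hbb2, hQL, hQopt⟩
    refine ⟨hb2, ⟨hQL, ?_, le_refl 0, h0ebar⟩, ?_⟩
    · intro j; simpa using hbb2 j
    · intro w hw
      exact hQopt w.1 hw.1
  have hobj_embed : ∀ (M : ℝ) (x : (Fin n1 → ℝ) × (Fin n2 → ℝ)),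
      objQ' n1 n2 c21 c22 M (x.1, (x.2, (0:ℝ))) = objQ n1 n2 c21 c22 x := by
    intro M x; simp [objQ, objQ']
  have hvle : ∀ M : ℝ, 0 < M → v M ≤ V := by
    intro M hM
    calc v M ≤ objQ' n1 n2 c21 c22 M (xQ.1, (xQ.2, 0)) :=
          hyO M hM _ (hembed xQ hxQF)
      _ = V := by rw [hobj_embed M xQ]
  have he0 : ∀ M : ℝ, 0 < M → 0 ≤ (y M).2.2 := by
    intro M hM
    exact ((hyF M hM).2.1).2.2.1
  have hmono : ∀ M M' : ℝ, 0 < M → M ≤ M' → v M ≤ v M' := by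
    intro M M' hM hMM'
    have hM' : 0 < M' := lt_of_lt_of_le hM hMM'
    have h1 : v M ≤ objQ' n1 n2 c21 c22 M (y M') := hyO M hM _ (hyF M' hM')
    have h2 : objQ' n1 n2 c21 c22 M (y M') ≤ objQ' n1 n2 c21 c22 M' (y M') := by
      simp only [objQ']
      have := he0 M' hM'
      nlinarith
    calc v M ≤ _ := h1
      _ ≤ _ := h2
  -- dichotomy
  have hdich : ∀ x ∈ Fs', ∀ y1 ∈ QLL m1 n1 n2 A11 A12 b1 x.2.1,
      (∑ k, (c11 k:ℝ) * y1 k) < (∑ k, (c11 k:ℝ) * x.1 k) →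
      ebar = (1 : WithTop ℝ) ∧ x.2.2 = 1 := by
    rintro ⟨x1, x2, e⟩ ⟨hb2, hll, hopt⟩ y1 hy1 hlt
    obtain ⟨hllb1, hllbb2, hlle0, hlleb⟩ := hll
    rcases hebar with heb | heb
    · -- case ebar = 1
      refine ⟨heb, ?_⟩
      have he1 : e ≤ 1 := by
        rw [heb] at hlleb
        exact_mod_cast hlleb
      by_contra hne
      have hlt1 : e < 1 := lt_of_le_of_ne he1 hne
      set C : ℝ := 1 + ∑ j, max ((bb2 j : ℝ) -
        (∑ k, (Ab21 j k : ℝ) * y1 k + ∑ k, (Ab22 j k : ℝ) * x2 k)) 0 with hCdef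
      have hCsum0 : 0 ≤ ∑ j, max ((bb2 j : ℝ) -
          (∑ k, (Ab21 j k : ℝ) * y1 k + ∑ k, (Ab22 j k : ℝ) * x2 k)) 0 :=
        Finset.sum_nonneg (fun j _ => le_max_right _ _)
      have hC1 : 1 ≤ C := by rw [hCdef]; linarith
      have hCv : ∀ j, (bb2 j : ℝ) ≤
          ∑ k, (Ab21 j k : ℝ) * y1 k + ∑ k, (Ab22 j k : ℝ) * x2 k + (C - 1) := by
        intro j
        have h1 : max ((bb2 j : ℝ) -
            (∑ k, (Ab21 j k : ℝ) * y1 k + ∑ k, (Ab22 j k : ℝ) * x2 k)) 0 ≤ C - 1 := by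
          rw [hCdef]
          have := Finset.single_le_sum
            (f := fun j => max ((bb2 j : ℝ) -
              (∑ k, (Ab21 j k : ℝ) * y1 k + ∑ k, (Ab22 j k : ℝ) * x2 k)) 0)
            (fun j _ => le_max_right _ _) (Finset.mem_univ j)
          linarith
        have h2 := le_max_left ((bb2 j : ℝ) -
            (∑ k, (Ab21 j k : ℝ) * y1 k + ∑ k, (Ab22 j k : ℝ) * x2 k)) 0
        linarith
      set l : ℝ := (1 - e) / (C - e) with hldef
      have hCe : 0 < C - e := by linarith
      have hl0 : 0 < l := div_pos (by linarith) hCe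
      have hl1 : l ≤ 1 := by
        rw [hldef, div_le_one hCe]; linarith
      set z : Fin n1 → ℝ := fun i => (1 - l) * x1 i + l * y1 i with hzdef
      set el : ℝ := (1 - l) * e + l * C with heldef
      have hel1 : el = 1 := by
        rw [heldef, hldef]
        field_simp
        ring
      have hzQLL : z ∈ QLL m1 n1 n2 A11 A12 b1 x2 := by
        intro j
        have h1 := hllb1 j
        have h2 := hy1 j
        rw [hzdef]
        rw [rowSum_combo]
        nlinarith [h1, h2, hl0, hl1]
      have hzel : (z, el) ∈ QLL' m1 m2' n1 n2 A11 A12 Ab21 Ab22 b1 bb2 ebar x2 := by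
        refine ⟨hzQLL, ?_, ?_, ?_⟩
        · intro j
          have h1 := hllbb2 j
          have h2 := hCv j
          show (bb2 j : ℝ) ≤ ∑ k, (Ab21 j k : ℝ) * z k + ∑ k, (Ab22 j k : ℝ) * x2 k + el
          rw [hzdef, rowSum_combo, heldef]
          nlinarith [h1, h2, hl0, hl1, hC1]
        · show 0 ≤ el
          rw [heldef]
          nlinarith [hlle0, hC1, hl0, hl1]
        · show ((el : ℝ) : WithTop ℝ) ≤ ebar
          rw [hel1, heb]
          exact le_refl _
      have := hopt (z, el) hzel
      simp only at this
      rw [hzdef] at this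
      rw [show (fun i => (1 - l) * x1 i + l * y1 i) = fun i => (1-l) * x1 i + l * y1 i from rfl] at this
      have hcombo := rowSum_combo c11 x1 y1 l
      rw [hcombo] at this
      nlinarith [hlt, hl0]
    · -- case ebar = ⊤ : contradiction
      exfalso
      set e' : ℝ := ∑ j, max ((bb2 j : ℝ) -
        (∑ k, (Ab21 j k : ℝ) * y1 k + ∑ k, (Ab22 j k : ℝ) * x2 k)) 0 with he'def
      have he'0 : 0 ≤ e' := Finset.sum_nonneg (fun j _ => le_max_right _ _)
      have he'v : ∀ j, (bb2 j : ℝ) ≤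
          ∑ k, (Ab21 j k : ℝ) * y1 k + ∑ k, (Ab22 j k : ℝ) * x2 k + e' := by
        intro j
        have h1 : max ((bb2 j : ℝ) -
            (∑ k, (Ab21 j k : ℝ) * y1 k + ∑ k, (Ab22 j k : ℝ) * x2 k)) 0 ≤ e' := by
          rw [he'def]
          exact Finset.single_le_sum (f := fun j => max ((bb2 j : ℝ) -
            (∑ k, (Ab21 j k : ℝ) * y1 k + ∑ k, (Ab22 j k : ℝ) * x2 k)) 0)
            (fun j _ => le_max_right _ _) (Finset.mem_univ j)
        have h2 := le_max_left ((bb2 j : ℝ) -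
            (∑ k, (Ab21 j k : ℝ) * y1 k + ∑ k, (Ab22 j k : ℝ) * x2 k)) 0
        linarith
      have hmem : (y1, e') ∈ QLL' m1 m2' n1 n2 A11 A12 Ab21 Ab22 b1 bb2 ebar x2 :=
        ⟨hy1, he'v, he'0, by rw [heb]; exact le_top⟩
      have := hopt (y1, e') hmem
      simp only at this
      linarith
  -- parameter threshold M1
  set M1 : ℝ := 2 * (V - v 1) + 2 with hM1def
  have hv1V : v 1 ≤ V := hvle 1 one_pos
  have hM1two : 2 ≤ M1 := by rw [hM1def]; linarith
  -- Step 4 : for M ≥ M1 the optimum's x1 is QLL-optimal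
  have hQLLopt : ∀ M : ℝ, M1 ≤ M → ∀ y1 ∈ QLL m1 n1 n2 A11 A12 b1 (y M).2.1,
      (∑ k, (c11 k:ℝ) * (y M).1 k) ≤ ∑ k, (c11 k:ℝ) * y1 k := by
    intro M hM y1 hy1
    by_contra hcon
    push_neg at hcon
    have hMpos : 0 < M := by linarith
    obtain ⟨heb, he1⟩ := hdich (y M) (hyF M hMpos) y1 hy1 hcon
    have hhalfpos : 0 < M / 2 := by linarith
    have hhalf1 : (1:ℝ) ≤ M / 2 := by linarith
    have hvhalf : v (M/2) ≤ objQ' n1 n2 c21 c22 (M/2) (y M) :=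
      hyO (M/2) hhalfpos _ (hyF M hMpos)
    have hobj : objQ' n1 n2 c21 c22 (M/2) (y M) = v M - M/2 := by
      rw [hvdef]
      simp only [objQ', he1]
      ring
    have h1 : v 1 ≤ v (M/2) := hmono 1 (M/2) one_pos hhalf1
    have h2 : v M ≤ V := hvle M hMpos
    rw [hobj] at hvhalf
    rw [hM1def] at hM
    linarith
  -- the E polyhedron : projection of the lower-level epigraph
  set pS : (ℝ × (Fin n2 → ℝ)) × (Fin n1 → ℝ) →ₗ[ℝ] ℝ :=
    (LinearMap.fst ℝ ℝ (Fin n2 → ℝ)).comp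
      (LinearMap.fst ℝ (ℝ × (Fin n2 → ℝ)) (Fin n1 → ℝ)) with hpSdef
  set pXX2 : (ℝ × (Fin n2 → ℝ)) × (Fin n1 → ℝ) →ₗ[ℝ] (Fin n2 → ℝ) :=
    (LinearMap.snd ℝ ℝ (Fin n2 → ℝ)).comp
      (LinearMap.fst ℝ (ℝ × (Fin n2 → ℝ)) (Fin n1 → ℝ)) with hpXX2def
  set pY : (ℝ × (Fin n2 → ℝ)) × (Fin n1 → ℝ) →ₗ[ℝ] (Fin n1 → ℝ) :=
    LinearMap.snd ℝ (ℝ × (Fin n2 → ℝ)) (Fin n1 → ℝ) with hpYdef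
  set S0 : Set ((ℝ × (Fin n2 → ℝ)) × (Fin n1 → ℝ)) :=
    {z | ∀ i : Unit ⊕ Fin m1,
      (Sum.elim (fun _ => (0:ℝ)) (fun j => (b1 j : ℝ)) i) ≤
      (Sum.elim (fun _ => pS - (rowLin c11).comp pY)
        (fun j => (rowLin (A11 j)).comp pY + (rowLin (A12 j)).comp pXX2) i) z}
    with hS0def
  have hS0mem : ∀ z : (ℝ × (Fin n2 → ℝ)) × (Fin n1 → ℝ), z ∈ S0 ↔
      ((∑ k, (c11 k : ℝ) * z.2 k) ≤ z.1.1 ∧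
        ∀ j, (b1 j : ℝ) ≤ ∑ k, (A11 j k : ℝ) * z.2 k + ∑ k, (A12 j k : ℝ) * z.1.2 k) := by
    intro z
    rw [hS0def]
    simp only [Set.mem_setOf_eq, Sum.forall, Sum.elim_inl, Sum.elim_inr,
      LinearMap.sub_apply, LinearMap.add_apply, LinearMap.comp_apply,
      LinearMap.fst_apply, LinearMap.snd_apply, rowLin_apply,
      hpSdef, hpXX2def, hpYdef, sub_nonneg]
    constructor
    · rintro ⟨h1, h2⟩; exact ⟨h1 (), h2⟩
    · rintro ⟨h1, h2⟩; exact ⟨fun _ => h1, h2⟩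
  have hS0poly : IsPolyh S0 := by
    rw [hS0def]
    exact isPolyh_rows _ _ _
  have hEpoly : IsPolyh (Prod.fst '' S0) := hS0poly.fst_image_pi n1
  obtain ⟨κ, instκ, F, γ, hE⟩ := hEpoly
  haveI := instκ
  set α : κ → ℝ := fun k => F k ((1:ℝ), (0 : Fin n2 → ℝ)) with hαdef
  set Gm : κ → ((Fin n2 → ℝ) →ₗ[ℝ] ℝ) :=
    fun k => (F k).comp (LinearMap.inr ℝ ℝ (Fin n2 → ℝ)) with hGmdef
  have hFdec : ∀ (k : κ) (s : ℝ) (x2 : Fin n2 → ℝ),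
      F k (s, x2) = s * α k + Gm k x2 := by
    intro k s x2
    have hsplit : ((s, x2) : ℝ × (Fin n2 → ℝ)) =
        s • ((1:ℝ), (0 : Fin n2 → ℝ)) + ((0:ℝ), x2) := by
      simp [Prod.ext_iff]
    rw [hsplit, map_add, map_smul, smul_eq_mul]
    rw [hαdef, hGmdef]
    simp [LinearMap.comp_apply]
  have hEmem : ∀ (s : ℝ) (x2 : Fin n2 → ℝ), ((s, x2) ∈ Prod.fst '' S0 ↔
      ∃ y1 : Fin n1 → ℝ, (∑ k, (c11 k : ℝ) * y1 k) ≤ s ∧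
        ∀ j, (b1 j : ℝ) ≤ ∑ k, (A11 j k : ℝ) * y1 k + ∑ k, (A12 j k : ℝ) * x2 k) := by
    intro s x2
    constructor
    · rintro ⟨⟨⟨s', x2'⟩, y1⟩, hz, heq⟩
      obtain ⟨rfl, rfl⟩ : s' = s ∧ x2' = x2 := by
        simpa [Prod.ext_iff] using heq
      rw [hS0mem] at hz
      exact ⟨y1, hz⟩
    · rintro ⟨y1, h1, h2⟩
      exact ⟨((s, x2), y1), (hS0mem _).2 ⟨h1, h2⟩, rfl⟩
  -- the key existence of a tight dual row at an optimum
  have hkey : ∀ M : ℝ, M1 ≤ M → ∃ k : κ, 0 < α k ∧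
      α k * (∑ kk, (c11 kk : ℝ) * (y M).1 kk) + Gm k ((y M).2.1) ≤ γ k := by
    intro M hM
    have hMpos : 0 < M := by linarith
    set s1 : ℝ := ∑ kk, (c11 kk : ℝ) * (y M).1 kk with hs1def
    have hx1QLL : (y M).1 ∈ QLL m1 n1 n2 A11 A12 b1 ((y M).2.1) :=
      ((hyF M hMpos).2.1).1
    have hmemE : (s1, (y M).2.1) ∈ Prod.fst '' S0 :=
      (hEmem s1 ((y M).2.1)).2 ⟨(y M).1, le_refl _, hx1QLL⟩
    have hrows : ∀ k, (γ k : ℝ) ≤ F k (s1, (y M).2.1) := by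
      have h := hmemE; rw [hE] at h; exact h
    by_contra hnot
    push_neg at hnot
    set Kp : Finset κ := Finset.univ.filter (fun k => 0 < α k) with hKpdef
    set s' : ℝ := if h : Kp.Nonempty then
        Kp.sup' h (fun k => (γ k - Gm k ((y M).2.1)) / α k) else s1 - 1 with hs'def
    clear_value s'
    have hs'lt : s' < s1 := by
      rw [hs'def]; split
      · rename_i h
        rw [Finset.sup'_lt_iff]
        intro k hk
        have hαk : 0 < α k := (Finset.mem_filter.mp hk).2
        have := hnot k hαk
        rw [div_lt_iff₀ hαk]
        linarith
      · linarith
    have hs'E : (s', (y M).2.1) ∈ Prod.fst '' S0 := by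
      rw [hE]
      intro k
      rw [hFdec]
      rcases lt_trichotomy (α k) 0 with hneg | hzero | hpos
      · have hrow := hrows k
        rw [hFdec] at hrow
        have hmul : s1 * α k ≤ s' * α k :=
          mul_le_mul_of_nonpos_right (le_of_lt hs'lt) (le_of_lt hneg)
        linarith
      · have hrow := hrows k
        rw [hFdec] at hrow
        rw [hzero, mul_zero] at hrow ⊢
        linarith
      · have hkmem : k ∈ Kp := by simp [hKpdef, hpos]
        have hKpne : Kp.Nonempty := ⟨k, hkmem⟩
        have hle : (γ k - Gm k ((y M).2.1)) / α k ≤ s' := by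
          rw [hs'def, dif_pos hKpne]
          exact Finset.le_sup' (fun k => (γ k - Gm k ((y M).2.1)) / α k) hkmem
        rw [div_le_iff₀ hpos] at hle
        linarith
    obtain ⟨y1, hy1le, hy1QLL⟩ := (hEmem s' ((y M).2.1)).1 hs'E
    have := hQLLopt M hM y1 hy1QLL
    rw [← hs1def] at this
    linarith
  -- the Qk polyhedra living in ((ℝ × ℝ) × (Fin n1 → ℝ)) × (Fin n2 → ℝ)
  set pIn : ((ℝ × ℝ) × (Fin n1 → ℝ)) × (Fin n2 → ℝ) →ₗ[ℝ] (ℝ × ℝ) × (Fin n1 → ℝ) :=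
    LinearMap.fst ℝ ((ℝ × ℝ) × (Fin n1 → ℝ)) (Fin n2 → ℝ) with hpIndef
  set pX2 : ((ℝ × ℝ) × (Fin n1 → ℝ)) × (Fin n2 → ℝ) →ₗ[ℝ] (Fin n2 → ℝ) :=
    LinearMap.snd ℝ ((ℝ × ℝ) × (Fin n1 → ℝ)) (Fin n2 → ℝ) with hpX2def
  set pX1 : ((ℝ × ℝ) × (Fin n1 → ℝ)) × (Fin n2 → ℝ) →ₗ[ℝ] (Fin n1 → ℝ) :=
    (LinearMap.snd ℝ (ℝ × ℝ) (Fin n1 → ℝ)).comp pIn with hpX1def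
  set pAT : ((ℝ × ℝ) × (Fin n1 → ℝ)) × (Fin n2 → ℝ) →ₗ[ℝ] (ℝ × ℝ) :=
    (LinearMap.fst ℝ (ℝ × ℝ) (Fin n1 → ℝ)).comp pIn with hpATdef
  set pA : ((ℝ × ℝ) × (Fin n1 → ℝ)) × (Fin n2 → ℝ) →ₗ[ℝ] ℝ :=
    (LinearMap.fst ℝ ℝ ℝ).comp pAT with hpAdef
  set pT : ((ℝ × ℝ) × (Fin n1 → ℝ)) × (Fin n2 → ℝ) →ₗ[ℝ] ℝ :=
    (LinearMap.snd ℝ ℝ ℝ).comp pAT with hpTdef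
  set Qk : κ → Set (((ℝ × ℝ) × (Fin n1 → ℝ)) × (Fin n2 → ℝ)) := fun k =>
    {w | ∀ j : Fin m1, (b1 j : ℝ) ≤ ((rowLin (A11 j)).comp pX1 + (rowLin (A12 j)).comp pX2) w}
    ∩ ({w | ∀ j : Fin m2, (b2 j : ℝ) ≤ ((rowLin (A21 j)).comp pX1 + (rowLin (A22 j)).comp pX2) w}
    ∩ ({w | ∀ j : Fin m2', (bb2 j : ℝ) ≤
          ((rowLin (Ab21 j)).comp pX1 + (rowLin (Ab22 j)).comp pX2 + pT) w}
    ∩ ({w | (0:ℝ) ≤ pT w}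
    ∩ ({w | (if ebar = (1 : WithTop ℝ) then (-1:ℝ) else 0) ≤
          (if ebar = (1 : WithTop ℝ) then -pT else 0) w}
    ∩ ({w | -γ k ≤ (-(α k • ((rowLin c11).comp pX1) + (Gm k).comp pX2)) w}
    ∩ ({w | (0:ℝ) ≤ (pA - ((rowLin c21).comp pX1 + (rowLin c22).comp pX2)) w}
    ∩ {w | (0:ℝ) ≤ (((rowLin c21).comp pX1 + (rowLin c22).comp pX2) - pA) w})))))) with hQkdef
  have hQkpoly : ∀ k, IsPolyh (Qk k) := by
    intro k
    rw [hQkdef]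
    exact (isPolyh_rows _ _ _).inter ((isPolyh_rows _ _ _).inter
      ((isPolyh_rows _ _ _).inter ((isPolyh_halfspace _ _).inter
      ((isPolyh_halfspace _ _).inter ((isPolyh_halfspace _ _).inter
      ((isPolyh_halfspace _ _).inter (isPolyh_halfspace _ _)))))))
  have hQkmem : ∀ (k : κ) (w : ((ℝ × ℝ) × (Fin n1 → ℝ)) × (Fin n2 → ℝ)),
      w ∈ Qk k ↔
      ((∀ j, (b1 j : ℝ) ≤ ∑ kk, (A11 j kk : ℝ) * w.1.2 kk + ∑ kk, (A12 j kk : ℝ) * w.2 kk) ∧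
       (∀ j, (b2 j : ℝ) ≤ ∑ kk, (A21 j kk : ℝ) * w.1.2 kk + ∑ kk, (A22 j kk : ℝ) * w.2 kk) ∧
       (∀ j, (bb2 j : ℝ) ≤
          ∑ kk, (Ab21 j kk : ℝ) * w.1.2 kk + ∑ kk, (Ab22 j kk : ℝ) * w.2 kk + w.1.1.2) ∧
       (0 ≤ w.1.1.2) ∧
       (ebar = (1 : WithTop ℝ) → w.1.1.2 ≤ 1) ∧
       (α k * (∑ kk, (c11 kk : ℝ) * w.1.2 kk) + Gm k w.2 ≤ γ k) ∧
       (w.1.1.1 = ∑ kk, (c21 kk : ℝ) * w.1.2 kk + ∑ kk, (c22 kk : ℝ) * w.2 kk)) := by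
    intro k w
    rw [hQkdef]
    constructor
    · rintro ⟨h1, h2, h3, h4, h5, h6, h7, h8⟩
      refine ⟨h1, h2, h3, h4, ?_, ?_, ?_⟩
      · intro heb
        simp only [if_pos heb] at h5
        have h5' : (-1:ℝ) ≤ -(w.1.1.2) := h5
        linarith
      · have h6' : -γ k ≤ -(α k * (∑ kk, (c11 kk : ℝ) * w.1.2 kk) + Gm k w.2) := h6
        linarith
      · have h7' : (0:ℝ) ≤ w.1.1.1 -
            (∑ kk, (c21 kk : ℝ) * w.1.2 kk + ∑ kk, (c22 kk : ℝ) * w.2 kk) := h7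
        have h8' : (0:ℝ) ≤
            (∑ kk, (c21 kk : ℝ) * w.1.2 kk + ∑ kk, (c22 kk : ℝ) * w.2 kk) - w.1.1.1 := h8
        linarith
    · rintro ⟨h1, h2, h3, h4, h5, h6, h7⟩
      refine ⟨h1, h2, h3, h4, ?_, ?_, ?_, ?_⟩
      · by_cases heb : ebar = (1 : WithTop ℝ)
        · simp only [if_pos heb]
          show (-1:ℝ) ≤ -(w.1.1.2)
          linarith [h5 heb]
        · simp only [if_neg heb]
          show (0:ℝ) ≤ (0:ℝ)
          exact le_refl 0
      · show -γ k ≤ -(α k * (∑ kk, (c11 kk : ℝ) * w.1.2 kk) + Gm k w.2)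
        linarith
      · show (0:ℝ) ≤ w.1.1.1 -
            (∑ kk, (c21 kk : ℝ) * w.1.2 kk + ∑ kk, (c22 kk : ℝ) * w.2 kk)
        linarith
      · show (0:ℝ) ≤
            (∑ kk, (c21 kk : ℝ) * w.1.2 kk + ∑ kk, (c22 kk : ℝ) * w.2 kk) - w.1.1.1
        linarith
  set Dk : κ → Set (ℝ × ℝ) := fun k => Prod.fst '' (Prod.fst '' (Qk k)) with hDkdef
  have hDkpoly : ∀ k, IsPolyh (Dk k) := by
    intro k
    rw [hDkdef]
    exact IsPolyh.fst_image_pi n1 (IsPolyh.fst_image_pi n2 (hQkpoly k))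
  have hDkmem : ∀ (k : κ) (z : ℝ × ℝ), z ∈ Dk k ↔
      ∃ x1 x2, ((z, x1), x2) ∈ Qk k := by
    intro k z
    rw [hDkdef]
    constructor
    · rintro ⟨w1, ⟨w, hw, rfl⟩, rfl⟩
      exact ⟨w.1.2, w.2, hw⟩
    · rintro ⟨x1, x2, hw⟩
      exact ⟨(z, x1), ⟨((z, x1), x2), hw, rfl⟩, rfl⟩
  have ht0Dk : ∀ (k : κ), ∀ z ∈ Dk k, 0 ≤ z.2 := by
    intro k z hz
    obtain ⟨x1, x2, hw⟩ := (hDkmem k z).1 hz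
    exact ((hQkmem k _).1 hw).2.2.2.1
  -- a Qk point yields a feasible point of FQ' with matching objective data
  have hQkFQ' : ∀ (k : κ), 0 < α k → ∀ w ∈ Qk k,
      (w.1.2, (w.2, w.1.1.2)) ∈ Fs' ∧
      w.1.1.1 = ∑ kk, (c21 kk : ℝ) * w.1.2 kk + ∑ kk, (c22 kk : ℝ) * w.2 kk := by
    intro k hαk w hw
    obtain ⟨h1, h2, h3, h4, h5, h6, h7⟩ := (hQkmem k w).1 hw
    refine ⟨⟨h2, ⟨h1, h3, h4, ?_⟩, ?_⟩, h7⟩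
    · rcases hebar with heb | heb
      · rw [heb]
        exact_mod_cast h5 heb
      · rw [heb]; exact le_top
    · -- lower-level optimality from the tight dual row
      intro wll hwll
      have hwllQLL : wll.1 ∈ QLL m1 n1 n2 A11 A12 b1 w.2 := hwll.1
      have hmemE : ((∑ kk, (c11 kk : ℝ) * wll.1 kk), w.2) ∈ Prod.fst '' S0 :=
        (hEmem _ w.2).2 ⟨wll.1, le_refl _, hwllQLL⟩
      have hrow : γ k ≤ F k ((∑ kk, (c11 kk : ℝ) * wll.1 kk), w.2) := by
        rw [hE] at hmemE; exact hmemE k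
      rw [hFdec] at hrow
      have hcomm : (∑ kk, (c11 kk : ℝ) * wll.1 kk) * α k =
          α k * (∑ kk, (c11 kk : ℝ) * wll.1 kk) :=
        mul_comm _ _
      have : α k * (∑ kk, (c11 kk : ℝ) * w.1.2 kk) ≤
          α k * (∑ kk, (c11 kk : ℝ) * wll.1 kk) := by linarith [hrow, h6, hcomm]
      exact le_of_mul_le_mul_left this hαk
  -- the optimum's image point lies in some Dk
  have himg : ∀ M : ℝ, M1 ≤ M → ∃ k : κ, 0 < α k ∧
      ((∑ kk, (c21 kk : ℝ) * (y M).1 kk + ∑ kk, (c22 kk : ℝ) * (y M).2.1 kk),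
        (y M).2.2) ∈ Dk k := by
    intro M hM
    have hMpos : 0 < M := by linarith
    obtain ⟨k, hαk, hkrow⟩ := hkey M hM
    obtain ⟨hb2, ⟨hllb1, hllbb2, hlle0, hlleb⟩, _⟩ := hyF M hMpos
    have hle1 : ebar = (1 : WithTop ℝ) → (y M).2.2 ≤ 1 := by
      intro heb
      rw [heb, ← WithTop.coe_one, WithTop.coe_le_coe] at hlleb
      exact hlleb
    exact ⟨k, hαk, (hDkmem k _).2 ⟨(y M).1, (y M).2.1, (hQkmem k _).2
      ⟨hllb1, hb2, hllbb2, hlle0, hle1, hkrow, rfl⟩⟩⟩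
  -- per-piece eventual minimizers
  have hch : ∀ k : κ, 0 < α k → (Dk k).Nonempty →
      ∃ z0, z0 ∈ Dk k ∧ ∃ Ms : ℝ, ∀ M ≥ Ms, ∀ z ∈ Dk k,
        z0.1 + M * z0.2 ≤ z.1 + M * z.2 := by
    intro k hαk hne
    have hbd : ∀ z ∈ Dk k, v 1 ≤ z.1 + 1 * z.2 := by
      intro z hz
      obtain ⟨x1, x2, hw⟩ := (hDkmem k z).1 hz
      obtain ⟨hmem, heqz⟩ := hQkFQ' k hαk _ hw
      have hvle1 := hyO 1 one_pos _ hmem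
      have : objQ' n1 n2 c21 c22 1 (x1, (x2, z.2)) = z.1 + 1 * z.2 := by
        simp only [objQ']
        rw [← heqz]
      rw [this] at hvle1
      exact hvle1
    obtain ⟨z0, hz0, Ms, hMs⟩ := twoDim_min' (Dk k) (hDkpoly k) hne
      (fun z hz => ht0Dk k z hz) ⟨1, v 1, hbd⟩
    exact ⟨z0, hz0, Ms, hMs⟩
  choose! z0 hz0mem Msel hMsel using hch
  set Kne : Finset κ := Finset.univ.filter (fun k => 0 < α k ∧ (Dk k).Nonempty) with hKnedef
  have hKneNE : Kne.Nonempty := by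
    obtain ⟨k, hαk, hmem⟩ := himg M1 (le_refl M1)
    refine ⟨k, ?_⟩
    rw [hKnedef]
    simp only [Finset.mem_filter, Finset.mem_univ, true_and]
    exact ⟨hαk, ⟨_, hmem⟩⟩
  set Mbig : ℝ := max (M1 + 1) (Kne.sup' hKneNE Msel) with hMbigdef
  have hMbigM1 : M1 + 1 ≤ Mbig := le_max_left _ _
  have hMbigpos : 0 < Mbig := by linarith
  -- the value formula at integer-shifted penalties
  have hvform : ∀ j : ℕ, ∃ k ∈ Kne,
      v (Mbig + (j:ℝ)) = (z0 k).1 + (Mbig + (j:ℝ)) * (z0 k).2 := by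
    intro j
    have hj0 : (0:ℝ) ≤ (j:ℝ) := Nat.cast_nonneg j
    have hMM1 : M1 ≤ Mbig + (j:ℝ) := by linarith
    have hMpos : 0 < Mbig + (j:ℝ) := by linarith
    obtain ⟨k, hαk, hmem⟩ := himg (Mbig + (j:ℝ)) hMM1
    have hkKne : k ∈ Kne := by
      simp only [hKnedef, Finset.mem_filter, Finset.mem_univ, true_and]
      exact ⟨hαk, _, hmem⟩
    have hDkne : (Dk k).Nonempty := ⟨_, hmem⟩
    refine ⟨k, hkKne, ?_⟩
    have hMsk : Msel k ≤ Mbig + (j:ℝ) :=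
      le_trans (le_trans (Finset.le_sup' Msel hkKne) (le_max_right _ _)) (by linarith)
    have hvobj : v (Mbig + (j:ℝ)) =
        (∑ kk, (c21 kk : ℝ) * (y (Mbig + (j:ℝ))).1 kk +
          ∑ kk, (c22 kk : ℝ) * (y (Mbig + (j:ℝ))).2.1 kk) +
        (Mbig + (j:ℝ)) * (y (Mbig + (j:ℝ))).2.2 := by
      rw [hvdef]
      simp only [objQ']
    have hlow : (z0 k).1 + (Mbig + (j:ℝ)) * (z0 k).2 ≤ v (Mbig + (j:ℝ)) := by
      have := hMsel k hαk hDkne (Mbig + (j:ℝ)) hMsk _ hmem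
      rw [hvobj]
      exact this
    have hup : v (Mbig + (j:ℝ)) ≤ (z0 k).1 + (Mbig + (j:ℝ)) * (z0 k).2 := by
      obtain ⟨x1, x2, hw⟩ := (hDkmem k (z0 k)).1 (hz0mem k hαk hDkne)
      obtain ⟨hmem', heq'⟩ := hQkFQ' k hαk _ hw
      have h := hyO (Mbig + (j:ℝ)) hMpos _ hmem'
      have : objQ' n1 n2 c21 c22 (Mbig + (j:ℝ)) (x1, (x2, (z0 k).2)) =
          (z0 k).1 + (Mbig + (j:ℝ)) * (z0 k).2 := by
        simp only [objQ']
        rw [← heq']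
      rw [this] at h
      exact h
    linarith
  choose ksel hkselKne hkseleq using hvform
  haveI : Finite κ := Finite.of_fintype κ
  obtain ⟨kinf, hfib⟩ := Finite.exists_infinite_fiber ksel
  have hfibinf : (ksel ⁻¹' {kinf} : Set ℕ).Infinite := Set.infinite_coe_iff.mp hfib
  obtain ⟨j0, hj0⟩ := hfibinf.nonempty
  have hj0eq : ksel j0 = kinf := hj0
  have hkinfKne : kinf ∈ Kne := hj0eq ▸ hkselKne j0
  have hkinf' : 0 < α kinf ∧ (Dk kinf).Nonempty := by
    have := Finset.mem_filter.mp (by rw [hKnedef] at hkinfKne; exact hkinfKne)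
    exact this.2
  have ht0inf : 0 ≤ (z0 kinf).2 := ht0Dk kinf _ (hz0mem kinf hkinf'.1 hkinf'.2)
  have htinf : (z0 kinf).2 = 0 := by
    by_contra hne
    have hpos : 0 < (z0 kinf).2 := lt_of_le_of_ne ht0inf (Ne.symm hne)
    set N : ℕ := Nat.ceil ((V - (z0 kinf).1) / (z0 kinf).2) with hNdef
    obtain ⟨j1, hj1mem, hj1gt⟩ := hfibinf.exists_gt N
    have hj1eq : ksel j1 = kinf := hj1mem
    have heq := hkseleq j1
    rw [hj1eq] at heq
    have hj1pos : 0 < Mbig + (j1:ℝ) := by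
      have : (0:ℝ) ≤ (j1:ℝ) := Nat.cast_nonneg j1
      linarith
    have hle : v (Mbig + (j1:ℝ)) ≤ V := hvle _ hj1pos
    have h1 : ((V - (z0 kinf).1) / (z0 kinf).2) ≤ (N:ℝ) := Nat.le_ceil _
    have h2 : (N:ℝ) < (j1:ℝ) := by exact_mod_cast hj1gt
    rw [div_le_iff₀ hpos] at h1
    nlinarith [heq, hle, hMbigpos, hpos]
  obtain ⟨j1, hj1mem, hj01⟩ := hfibinf.exists_gt j0
  have hj1eq : ksel j1 = kinf := hj1mem
  have hveq0 : v (Mbig + (j0:ℝ)) = (z0 kinf).1 := by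
    have := hkseleq j0
    rw [hj0eq, htinf, mul_zero, add_zero] at this
    exact this
  have hveq1 : v (Mbig + (j1:ℝ)) = (z0 kinf).1 := by
    have := hkseleq j1
    rw [hj1eq, htinf, mul_zero, add_zero] at this
    exact this
  have hj0posR : (0:ℝ) ≤ (j0:ℝ) := Nat.cast_nonneg j0
  have hMfpos : 0 < Mbig + (j0:ℝ) := by linarith
  have hj01R : (j0:ℝ) + 1 ≤ (j1:ℝ) := by exact_mod_cast Nat.succ_le_of_lt hj01
  have hstep : v (Mbig + (j0:ℝ)) = v (Mbig + (j0:ℝ) + 1) := by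
    have hle1 : v (Mbig + (j0:ℝ)) ≤ v (Mbig + (j0:ℝ) + 1) :=
      hmono _ _ hMfpos (by linarith)
    have hle2 : v (Mbig + (j0:ℝ) + 1) ≤ v (Mbig + (j1:ℝ)) :=
      hmono _ _ (by linarith) (by linarith)
    rw [hveq0]
    rw [hveq1] at hle2
    rw [hveq0] at hle1
    linarith
  -- Step 5 : conclude v (Mf + 1) = V
  have hMfM1 : M1 ≤ Mbig + (j0:ℝ) := by linarith
  have hMf1pos : 0 < Mbig + (j0:ℝ) + 1 := by linarith
  have hMf1M1 : M1 ≤ Mbig + (j0:ℝ) + 1 := by linarith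
  have hstepv : v (Mbig + (j0:ℝ)) ≤
      objQ' n1 n2 c21 c22 (Mbig + (j0:ℝ)) (y (Mbig + (j0:ℝ) + 1)) :=
    hyO _ hMfpos _ (hyF _ hMf1pos)
  have hobjdiff : objQ' n1 n2 c21 c22 (Mbig + (j0:ℝ)) (y (Mbig + (j0:ℝ) + 1)) =
      v (Mbig + (j0:ℝ) + 1) - (y (Mbig + (j0:ℝ) + 1)).2.2 := by
    rw [hvdef]
    simp only [objQ']
    ring
  have hez : (y (Mbig + (j0:ℝ) + 1)).2.2 = 0 := by
    have h1 := he0 _ hMf1pos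
    rw [hobjdiff] at hstepv
    rw [← hstep] at hstepv
    linarith
  have hbb2z : ∀ j, (bb2 j : ℝ) ≤
      ∑ kk, (Ab21 j kk : ℝ) * (y (Mbig + (j0:ℝ) + 1)).1 kk +
      ∑ kk, (Ab22 j kk : ℝ) * (y (Mbig + (j0:ℝ) + 1)).2.1 kk := by
    intro j
    have h := ((hyF _ hMf1pos).2.1).2.1 j
    rw [hez, add_zero] at h
    exact h
  have hFQz : ((y (Mbig + (j0:ℝ) + 1)).1, (y (Mbig + (j0:ℝ) + 1)).2.1) ∈ Fs := by
    refine ⟨(hyF _ hMf1pos).1, hbb2z, ((hyF _ hMf1pos).2.1).1, ?_⟩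
    exact hQLLopt _ hMf1M1
  have hVz : V ≤ objQ n1 n2 c21 c22
      ((y (Mbig + (j0:ℝ) + 1)).1, (y (Mbig + (j0:ℝ) + 1)).2.1) := hxQopt _ hFQz
  have hobjeq : objQ n1 n2 c21 c22
      ((y (Mbig + (j0:ℝ) + 1)).1, (y (Mbig + (j0:ℝ) + 1)).2.1) =
      v (Mbig + (j0:ℝ) + 1) := by
    rw [hvdef]
    simp only [objQ, objQ', hez]
    ring
  have hvMf1 : v (Mbig + (j0:ℝ) + 1) = V := by
    have h1 := hvle _ hMf1pos
    rw [hobjeq] at hVz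
    linarith
  -- final conclusion
  refine ⟨Mbig + (j0:ℝ) + 1, hMf1pos, ?_⟩
  intro M hM
  have hMpos : 0 < M := lt_of_lt_of_le hMf1pos hM
  rw [sInf_image_eq_of_min _ _ xQ hxQF hxQopt,
    sInf_image_eq_of_min _ _ (y M) (hyF M hMpos) (hyO M hMpos)]
  have h1 : v M ≤ V := hvle M hMpos
  have h2 : V ≤ v M := by
    rw [← hvMf1]
    exact hmono _ _ hMf1pos hM
  have : V = v M := le_antisymm h2 h1
  exact this
end
end
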